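/- arXiv:1912.06308 — 7 statements merged into one kernel-verified Lean document; each statement's English description precedes it below -/
import Mathlib

section
/- Let K be an infinite field, let n ≥ 1, d ≥ 1, and fix a d^{n}-cage over K. If P ∈ K[x_0,…,x_n] is homogeneous of degree d and P(p_I) = 0 for every multi-index I in the supra-simplicial range, i.e. every I ∈ {1,…,d}^n with ∑_{j=1}^n (I_j − 1) ≤ d, then P(p_I) = 0 for every I ∈ {1,…,d}^n; that is, P vanishes at all d^n nodes of the cage. -/
/-!
Fix a linear form `ℓ` vanishing at no node. For every exponent `m` of a degree-`d` monomial in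
`n + 1` variables, let `T m = ℓ ^ m₀ · ∏ⱼ L j 0 ⋯ L j (mⱼ₊₁ - 1)`; when `mⱼ₊₁ = d` this is `𝓛ⱼ`.
Evaluating the `T m` is triangular with respect to `∑ⱼ mⱼ₊₁`: at the node `(m₁, …, mₙ)` when all
`mⱼ₊₁ < d`, and, for `T m = 𝓛ⱼ`, at a point of the line through the nodes `0` and `eⱼ` (where all
`𝓛ᵢ`, `i ≠ j`, vanish) chosen off the hyperplanes of colour `j`. So the `T m` are linearly
independent, hence a basis of the forms of degree `d`. Writing `P` in this basis, the same
triangularity at the supra-simplicial nodes kills every coefficient except those of the `𝓛ⱼ`,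
and these vanish at all nodes.
-/

open MvPolynomial Finset

theorem eq_zero_of_sum_mul_eq_zero_of_triangular {ι X R : Type*} [Fintype ι] [Semiring R]
    [NoZeroDivisors R] {f : ι → X → R} {c : ι → R} (μ : ι → ℕ) {S : Set ι} {Y : Set X}
    (hc : ∀ x ∈ Y, ∑ k, c k * f k x = 0)
    (hf : ∀ k ∈ S, ∃ x ∈ Y, f k x ≠ 0 ∧ ∀ k', k' ≠ k → f k' x ≠ 0 → k' ∈ S ∧ μ k' < μ k) :
    ∀ k ∈ S, c k = 0 := by
  intro k
  induction hμ : μ k using Nat.strong_induction_on generalizing k with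
  | _ N ih =>
    intro hk
    obtain ⟨x, hxY, hkx, hlower⟩ := hf k hk
    have hterm : ∀ k' ≠ k, c k' * f k' x = 0 := fun k' hk' => by
      by_cases hk'x : f k' x = 0
      · rw [hk'x, mul_zero]
      · obtain ⟨hk'S, hlt⟩ := hlower k' hk' hk'x
        rw [ih _ (hμ ▸ hlt) k' rfl hk'S, zero_mul]
    have := hc x hxY
    rw [Fintype.sum_eq_single k hterm] at this
    exact (mul_eq_zero.mp this).resolve_right hkx

namespace Finsupp

variable {σ : Type*}

noncomputable instance fintypeDegreeEq [Finite σ] (d : ℕ) : Fintype {m : σ →₀ ℕ // m.degree = d} :=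
  (finite_of_degree_eq d).fintype

theorem degree_eq_apply_zero_add_sum_succ {n : ℕ} (m : Fin (n + 1) →₀ ℕ) :
    m.degree = m 0 + ∑ j : Fin n, m j.succ := by
  rw [degree_eq_sum, Fin.sum_univ_succ]

theorem apply_eq_zero_of_apply_eq_degree [Fintype σ] {m : σ →₀ ℕ} {a b : σ}
    (ha : m a = m.degree) (hb : b ≠ a) : m b = 0 := by
  classical
  have : m a + m b ≤ m.degree := by
    rw [degree_eq_sum, ← Finset.sum_pair hb.symm]
    exact Finset.sum_le_sum_of_subset (subset_univ _)
  omega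

theorem sum_succ_lt_of_le_of_ne {n : ℕ} {m m' : Fin (n + 1) →₀ ℕ} (hdeg : m'.degree = m.degree)
    (hle : ∀ j : Fin n, m' j.succ ≤ m j.succ) (hne : m' ≠ m) :
    ∑ j : Fin n, m' j.succ < ∑ j : Fin n, m j.succ := by
  refine lt_of_le_of_ne (Finset.sum_le_sum fun j _ => hle j) fun hsum => hne ?_
  have hsucc : ∀ j : Fin n, m' j.succ = m j.succ :=
    fun j => (Finset.sum_eq_sum_iff_of_le fun j _ => hle j).mp hsum j (mem_univ j)
  rw [degree_eq_apply_zero_add_sum_succ, degree_eq_apply_zero_add_sum_succ, hsum] at hdeg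
  ext i
  exact Fin.cases (by omega) hsucc i

end Finsupp

namespace MvPolynomial

variable {σ R K : Type*}

theorem IsHomogeneous.exists_dual_eval_eq [CommSemiring R] {q : MvPolynomial σ R}
    (hq : q.IsHomogeneous 1) : ∃ φ : Module.Dual R (σ → R), ∀ v, φ v = eval v q := by
  have hspan : q ∈ Submodule.span R (Set.range X) := by
    rw [← homogeneousSubmodule_one_eq_span_X]; exact hq
  clear hq
  induction hspan using Submodule.span_induction with
  | mem _ h =>
    obtain ⟨i, rfl⟩ := h
    exact ⟨LinearMap.proj i, fun v => by simp⟩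
  | zero => exact ⟨0, fun v => by simp⟩
  | add q r _ _ hφ hψ =>
    obtain ⟨φ, hφ⟩ := hφ
    obtain ⟨ψ, hψ⟩ := hψ
    exact ⟨φ + ψ, fun v => by simp [hφ, hψ]⟩
  | smul a q _ hφ =>
    obtain ⟨φ, hφ⟩ := hφ
    exact ⟨a • φ, fun v => by simp [hφ]⟩

variable [Field K]

theorem IsHomogeneous.eval_eq_zero_of_mem_span {q : MvPolynomial σ K} (hq : q.IsHomogeneous 1)
    {s : Set (σ → K)} (hs : ∀ u ∈ s, eval u q = 0) {w : σ → K}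
    (hw : w ∈ Submodule.span K s) : eval w q = 0 := by
  obtain ⟨φ, hφ⟩ := hq.exists_dual_eval_eq
  have : Submodule.span K s ≤ LinearMap.ker φ :=
    Submodule.span_le.mpr fun u hu => by simp [hφ, hs u hu]
  simpa [hφ] using this hw

theorem exists_mem_span_forall_eval_ne_zero [Infinite K] {ι : Type*} [Finite ι]
    {q : ι → MvPolynomial σ K} (hq : ∀ i, (q i).IsHomogeneous 1) {s : Set (σ → K)}
    (hs : ∀ i, ∃ u ∈ s, eval u (q i) ≠ 0) :
    ∃ w ∈ Submodule.span K s, ∀ i, eval w (q i) ≠ 0 := by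
  choose φ hφ using fun i => (hq i).exists_dual_eval_eq
  simp_rw [← hφ] at hs ⊢
  exact Module.Dual.exists_forall_mem_ne_zero_of_forall_exists _ φ fun i =>
    let ⟨u, hu, hφu⟩ := hs i; ⟨u, Submodule.subset_span hu, hφu⟩

theorem exists_isHomogeneous_one_forall_eval_ne_zero [Infinite K] {ι : Type*} [Finite ι]
    {v : ι → σ → K} (hv : ∀ i, v i ≠ 0) :
    ∃ ℓ : MvPolynomial σ K, ℓ.IsHomogeneous 1 ∧ ∀ i, eval (v i) ℓ ≠ 0 := by
  obtain ⟨ℓ, hℓ, hℓv⟩ := Module.Dual.exists_forall_mem_ne_zero_of_forall_exists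
    (homogeneousSubmodule σ K 1) (fun i => (aeval (v i)).toLinearMap) fun i => by
      obtain ⟨a, ha⟩ := Function.ne_iff.mp (hv i)
      exact ⟨X a, isHomogeneous_X K a, by simpa using ha⟩
  exact ⟨ℓ, hℓ, by simpa using hℓv⟩

theorem finrank_homogeneousSubmodule [Fintype σ] (d : ℕ) :
    Module.finrank K (homogeneousSubmodule σ K d) = Fintype.card {m : σ →₀ ℕ // m.degree = d} := by
  rw [homogeneousSubmodule_eq_finsupp_supported]
  exact Module.finrank_eq_card_basis (basisRestrictSupport K _)

theorem span_eq_homogeneousSubmodule_of_linearIndependent [Fintype σ] {d : ℕ} {ι : Type*}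
    [Fintype ι] {T : ι → MvPolynomial σ K} (hT : LinearIndependent K T)
    (hThom : ∀ i, (T i).IsHomogeneous d)
    (hcard : Fintype.card ι = Fintype.card {m : σ →₀ ℕ // m.degree = d}) :
    Submodule.span K (Set.range T) = homogeneousSubmodule σ K d := by
  have : FiniteDimensional K (homogeneousSubmodule σ K d) :=
    Module.Finite.iff_fg.mpr (homogeneousSubmodule_fg σ K d)
  refine Submodule.eq_of_le_of_finrank_eq ?_ ?_
  · exact Submodule.span_le.mpr (Set.range_subset_iff.mpr hThom)
  · rw [finrank_span_eq_card hT, hcard, finrank_homogeneousSubmodule]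

end MvPolynomial

section Cage

variable {R : Type*} [CommSemiring R] {n d : ℕ} {ℓ : MvPolynomial (Fin (n + 1)) R}
  {L : Fin n → Fin d → MvPolynomial (Fin (n + 1)) R} {m : Fin (n + 1) →₀ ℕ}

variable (ℓ L m) in
noncomputable def cageForm : MvPolynomial (Fin (n + 1)) R :=
  ℓ ^ m 0 * ∏ j : Fin n, ∏ i ∈ {i : Fin d | (i : ℕ) < m j.succ}, L j i

theorem isHomogeneous_cageForm (hℓ : ℓ.IsHomogeneous 1) (hL : ∀ j i, (L j i).IsHomogeneous 1)
    (hm : m.degree = d) : (cageForm ℓ L m).IsHomogeneous d := by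
  have hprod : ∀ j : Fin n,
      (∏ i ∈ {i : Fin d | (i : ℕ) < m j.succ}, L j i).IsHomogeneous (m j.succ) := fun j => by
    convert IsHomogeneous.prod _ _ (fun _ => 1) fun i _ => hL j i
    simp [Fin.card_filter_val_lt, hm ▸ Finsupp.le_degree j.succ m]
  have := (hℓ.pow (m 0)).mul (IsHomogeneous.prod univ _ _ fun j _ => hprod j)
  rwa [one_mul, ← Finsupp.degree_eq_apply_zero_add_sum_succ, hm] at this

variable [NoZeroDivisors R] [Nontrivial R] {x : Fin (n + 1) → R}

theorem eval_cageForm_ne_zero_iff :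
    eval x (cageForm ℓ L m) ≠ 0 ↔
      (eval x ℓ = 0 → m 0 = 0) ∧ ∀ j (i : Fin d), (i : ℕ) < m j.succ → eval x (L j i) ≠ 0 := by
  simp [cageForm, prod_ne_zero_iff]

theorem eval_cageForm_eq_zero {j : Fin n} {i : Fin d} (hx : eval x (L j i) = 0)
    (hi : (i : ℕ) < m j.succ) : eval x (cageForm ℓ L m) = 0 :=
  not_not.mp fun h => (eval_cageForm_ne_zero_iff.mp h).2 j i hi hx

end Cage

section CageBasis

variable {K : Type*} [Field K] {n d : ℕ} {ℓ : MvPolynomial (Fin (n + 1)) K}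
  {L : Fin n → Fin d → MvPolynomial (Fin (n + 1)) K} {p : (Fin n → Fin d) → Fin (n + 1) → K}

theorem exists_node_cageForm_triangular (hnode : ∀ I j, eval (p I) (L j (I j)) = 0)
    (hne : ∀ j i I, i ≠ I j → eval (p I) (L j i) ≠ 0) (hℓ : ∀ I, eval (p I) ℓ ≠ 0)
    {m : Fin (n + 1) →₀ ℕ} (hmdeg : m.degree = d) (hm : ∀ j : Fin n, m j.succ < d) :
    ∃ I : Fin n → Fin d, ∑ j, (I j : ℕ) ≤ d ∧ eval (p I) (cageForm ℓ L m) ≠ 0 ∧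
      ∀ m' : Fin (n + 1) →₀ ℕ, m'.degree = d → m' ≠ m → eval (p I) (cageForm ℓ L m') ≠ 0 →
        (∀ j : Fin n, m' j.succ < d) ∧ ∑ j : Fin n, m' j.succ < ∑ j : Fin n, m j.succ := by
  refine ⟨fun j => ⟨m j.succ, hm j⟩, ?_, ?_, fun m' hm'deg hm'm hm'I => ?_⟩
  · rw [Finsupp.degree_eq_apply_zero_add_sum_succ] at hmdeg
    simp only
    omega
  · exact eval_cageForm_ne_zero_iff.mpr
      ⟨fun h => absurd h (hℓ _), fun j i hi => hne j i _ (Fin.ne_of_val_ne hi.ne)⟩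
  · have hle : ∀ j : Fin n, m' j.succ ≤ m j.succ := fun j =>
      not_lt.mp fun hlt => hm'I (eval_cageForm_eq_zero (hnode _ j) hlt)
    exact ⟨fun j => (hle j).trans_lt (hm j),
      Finsupp.sum_succ_lt_of_le_of_ne (hm'deg.trans hmdeg.symm) hle hm'm⟩

theorem exists_cageForm_triangular_of_apply_eq_degree [Infinite K] (hd : 2 ≤ d)
    (hL : ∀ j i, (L j i).IsHomogeneous 1) (hnode : ∀ I j, eval (p I) (L j (I j)) = 0)
    (hne : ∀ j i I, i ≠ I j → eval (p I) (L j i) ≠ 0) {m : Fin (n + 1) →₀ ℕ}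
    (hmdeg : m.degree = d) {j₀ : Fin n} (hj₀ : m j₀.succ = d) :
    ∃ w, eval w (cageForm ℓ L m) ≠ 0 ∧
      ∀ m' : Fin (n + 1) →₀ ℕ, m'.degree = d → m' ≠ m → eval w (cageForm ℓ L m') ≠ 0 →
        ∑ j : Fin n, m' j.succ < ∑ j : Fin n, m j.succ := by
  set A : Fin n → Fin d := fun _ => ⟨0, by omega⟩
  set B : Fin n → Fin d := Function.update A j₀ ⟨1, by omega⟩
  have hBA : ∀ j ≠ j₀, B j = A j := fun j hj => Function.update_of_ne hj _ _
  obtain ⟨w, hw, hwL⟩ := exists_mem_span_forall_eval_ne_zero (hL j₀) (s := {p A, p B}) fun i => by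
    by_cases hi : i = A j₀
    · exact ⟨p B, by simp, hne _ _ _ (by simp [B, hi, A])⟩
    · exact ⟨p A, by simp, hne _ _ _ hi⟩
  have hw0 : ∀ j ≠ j₀, eval w (L j (A j)) = 0 := fun j hj =>
    (hL j _).eval_eq_zero_of_mem_span
      (by rintro u (rfl | rfl); exacts [hnode A j, hBA j hj ▸ hnode B j]) hw
  have hm0 : ∀ k ≠ j₀.succ, m k = 0 := fun k hk =>
    Finsupp.apply_eq_zero_of_apply_eq_degree (hj₀.trans hmdeg.symm) hk
  refine ⟨w, eval_cageForm_ne_zero_iff.mpr ⟨fun _ => hm0 0 (Fin.succ_ne_zero j₀).symm,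
    fun j i hi => ?_⟩, fun m' hm'deg hm'm hm'w => ?_⟩
  · obtain rfl : j = j₀ := by
      by_contra hj
      rw [hm0 _ ((Fin.succ_injective _).ne hj)] at hi
      omega
    exact hwL i
  · refine Finsupp.sum_succ_lt_of_le_of_ne (hm'deg.trans hmdeg.symm) (fun j => ?_) hm'm
    by_cases hj : j = j₀
    · rw [hj, hj₀, ← hm'deg]
      exact Finsupp.le_degree _ _
    · have : m' j.succ ≤ 0 := not_lt.mp fun h => hm'w (eval_cageForm_eq_zero (hw0 j hj) h)
      omega

theorem linearIndependent_cageForm [Infinite K] (hd : 2 ≤ d)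
    (hL : ∀ j i, (L j i).IsHomogeneous 1) (hnode : ∀ I j, eval (p I) (L j (I j)) = 0)
    (hne : ∀ j i I, i ≠ I j → eval (p I) (L j i) ≠ 0) (hℓ : ∀ I, eval (p I) ℓ ≠ 0) :
    LinearIndependent K fun m : {m : Fin (n + 1) →₀ ℕ // m.degree = d} => cageForm ℓ L m := by
  rw [Fintype.linearIndependent_iff]
  intro c hc m
  refine eq_zero_of_sum_mul_eq_zero_of_triangular
    (fun m : {m : Fin (n + 1) →₀ ℕ // m.degree = d} => ∑ j : Fin n, m.1 j.succ)
    (f := fun m x => eval x (cageForm ℓ L m.1)) (S := Set.univ) (Y := Set.univ)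
    (fun x _ => by simpa [smul_eval] using congrArg (eval x) hc) (fun m _ => ?_) m trivial
  by_cases hsmall : ∀ j : Fin n, m.1 j.succ < d
  · obtain ⟨I, -, hI, hlower⟩ := exists_node_cageForm_triangular hnode hne hℓ m.2 hsmall
    exact ⟨p I, trivial, hI, fun m' hm' h =>
      ⟨trivial, (hlower m' m'.2 (Subtype.coe_ne_coe.mpr hm') h).2⟩⟩
  · obtain ⟨j₀, hj₀⟩ := not_forall.mp hsmall
    rw [not_lt] at hj₀
    obtain ⟨w, hw, hlower⟩ := exists_cageForm_triangular_of_apply_eq_degree hd hL hnode hne m.2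
      (le_antisymm ((Finsupp.le_degree _ _).trans_eq m.2) hj₀)
    exact ⟨w, trivial, hw, fun m' hm' h => ⟨trivial, hlower m' m'.2 (Subtype.coe_ne_coe.mpr hm') h⟩⟩

theorem span_cageForm [Infinite K] (hd : 2 ≤ d) (hℓhom : ℓ.IsHomogeneous 1)
    (hL : ∀ j i, (L j i).IsHomogeneous 1) (hnode : ∀ I j, eval (p I) (L j (I j)) = 0)
    (hne : ∀ j i I, i ≠ I j → eval (p I) (L j i) ≠ 0) (hℓ : ∀ I, eval (p I) ℓ ≠ 0) :
    Submodule.span K (Set.range fun m : {m : Fin (n + 1) →₀ ℕ // m.degree = d} => cageForm ℓ L m)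
      = homogeneousSubmodule (Fin (n + 1)) K d :=
  span_eq_homogeneousSubmodule_of_linearIndependent
    (linearIndependent_cageForm hd hL hnode hne hℓ) (fun m => isHomogeneous_cageForm hℓhom hL m.2)
    rfl

theorem eq_zero_of_eval_sum_smul_cageForm_eq_zero (hnode : ∀ I j, eval (p I) (L j (I j)) = 0)
    (hne : ∀ j i I, i ≠ I j → eval (p I) (L j i) ≠ 0) (hℓ : ∀ I, eval (p I) ℓ ≠ 0)
    {c : {m : Fin (n + 1) →₀ ℕ // m.degree = d} → K}
    (hc : ∀ I : Fin n → Fin d, ∑ j, (I j : ℕ) ≤ d →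
      eval (p I) (∑ m, c m • cageForm ℓ L m) = 0)
    (m : {m : Fin (n + 1) →₀ ℕ // m.degree = d}) (hm : ∀ j : Fin n, m.1 j.succ < d) :
    c m = 0 :=
  eq_zero_of_sum_mul_eq_zero_of_triangular
    (fun m : {m : Fin (n + 1) →₀ ℕ // m.degree = d} => ∑ j : Fin n, m.1 j.succ)
    (f := fun m x => eval x (cageForm ℓ L m.1)) (S := {m | ∀ j : Fin n, m.1 j.succ < d})
    (Y := {x | ∃ I : Fin n → Fin d, ∑ j, (I j : ℕ) ≤ d ∧ p I = x})
    (by rintro _ ⟨I, hI, rfl⟩; simpa [smul_eval] using hc I hI)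
    (fun m hm => by
      obtain ⟨I, hI, hmI, hlower⟩ := exists_node_cageForm_triangular hnode hne hℓ m.2 hm
      exact ⟨p I, ⟨I, hI, rfl⟩, hmI, fun m' hm' h =>
        hlower m' m'.2 (Subtype.coe_ne_coe.mpr hm') h⟩)
    m hm

end CageBasis

theorem vanish_on_supra_simplicial_implies_vanish_on_all_nodes_general
    {K : Type*} [Field K] [Infinite K] (n d : ℕ)
    (L : Fin n → Fin d → MvPolynomial (Fin (n + 1)) K)
    (hL : ∀ j i, (L j i).IsHomogeneous 1)
    (p : (Fin n → Fin d) → Fin (n + 1) → K)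
    (hp0 : ∀ I, p I ≠ 0)
    (hline : ∀ (I : Fin n → Fin d) (v : Fin (n + 1) → K),
      (∀ j, MvPolynomial.eval v (L j (I j)) = 0) ↔ ∃ c : K, v = c • p I)
    (hne : ∀ (j : Fin n) (i : Fin d) (I : Fin n → Fin d),
      i ≠ I j → MvPolynomial.eval (p I) (L j i) ≠ 0)
    (P : MvPolynomial (Fin (n + 1)) K) (hP : P.IsHomogeneous d)
    (hvan : ∀ I : Fin n → Fin d, (∑ j, (I j : ℕ)) ≤ d →
      MvPolynomial.eval (p I) P = 0) :
    ∀ I : Fin n → Fin d, MvPolynomial.eval (p I) P = 0 := by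
  intro I
  by_cases hI : ∑ j, (I j : ℕ) ≤ d
  · exact hvan I hI
  have hd : 2 ≤ d := by
    by_contra! hd
    exact hI ((sum_eq_zero fun j _ => by have := (I j).isLt; omega).trans_le (Nat.zero_le d))
  have hnode : ∀ I j, eval (p I) (L j (I j)) = 0 := fun I =>
    (hline I (p I)).mpr ⟨1, (one_smul K _).symm⟩
  obtain ⟨ℓ, hℓhom, hℓ⟩ := exists_isHomogeneous_one_forall_eval_ne_zero hp0
  obtain ⟨c, rfl⟩ := (Submodule.mem_span_range_iff_exists_fun K).mp
    ((span_cageForm hd hℓhom hL hnode hne hℓ).ge hP)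
  rw [map_sum]
  refine sum_eq_zero fun m _ => ?_
  rw [smul_eval]
  by_cases hm : ∀ j : Fin n, m.1 j.succ < d
  · rw [eq_zero_of_eval_sum_smul_cageForm_eq_zero hnode hne hℓ hvan m hm, zero_mul]
  · obtain ⟨j, hj⟩ := not_forall.mp hm
    exact mul_eq_zero_of_right _
      (eval_cageForm_eq_zero (hnode I j) ((I j).isLt.trans_le (not_lt.mp hj)))

/-- If a homogeneous polynomial of degree `d` vanishes at all nodes of a
supra-simplicial set of a `d^{n}`-cage, then it vanishes at all `d^n` nodes. -/
theorem vanish_on_supra_simplicial_implies_vanish_on_all_nodes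
    {K : Type*} [Field K] [Infinite K] (n d : ℕ) (hn : 1 ≤ n) (hd : 1 ≤ d)
    (L : Fin n → Fin d → MvPolynomial (Fin (n + 1)) K)
    (hL : ∀ j i, (L j i).IsHomogeneous 1)
    (p : (Fin n → Fin d) → Fin (n + 1) → K)
    (hp0 : ∀ I, p I ≠ 0)
    (hind : ∀ I : Fin n → Fin d, LinearIndependent K fun j => L j (I j))
    (hline : ∀ (I : Fin n → Fin d) (v : Fin (n + 1) → K),
      (∀ j, MvPolynomial.eval v (L j (I j)) = 0) ↔ ∃ c : K, v = c • p I)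
    (hne : ∀ (j : Fin n) (i : Fin d) (I : Fin n → Fin d),
      i ≠ I j → MvPolynomial.eval (p I) (L j i) ≠ 0)
    (P : MvPolynomial (Fin (n + 1)) K) (hP : P.IsHomogeneous d)
    (hvan : ∀ I : Fin n → Fin d, (∑ j, (I j : ℕ)) ≤ d →
      MvPolynomial.eval (p I) P = 0) :
    ∀ I : Fin n → Fin d, MvPolynomial.eval (p I) P = 0 :=
  vanish_on_supra_simplicial_implies_vanish_on_all_nodes_general n d L hL p hp0 hline hne P hP hvan
end

section
/- Let K be an infinite field, let n ≥ 1, d ≥ 1, and fix a (d+1)^{n}-cage over K, with nodes p_I indexed by I ∈ {1,…,d+1}^n. If P ∈ K[x_0,…,x_n] is homogeneous of degree d and P(p_I) = 0 for every I ∈ {1,…,d+1}^n with ∑_{j=1}^n (I_j − 1) ≤ d (the simplicial set of the (d+1)^{n}-cage), then P is the zero polynomial. -/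
/-!
Induct on `(n, d)` lexicographically. The forms of colours `2, …, n` restrict to a cage with one
colour fewer on the hyperplane `L_{1,1} = 0`, whose simplicial nodes are the simplicial nodes
`p_I` of the original cage with `I_1 = 1`; so by induction `P` vanishes on that hyperplane, and
`P = L_{1,1} Q`. Dropping the form `L_{1,1}` of colour `1` and the last form of every other colour
leaves a `d^n`-cage on whose simplicial nodes `L_{1,1}` does not vanish; `Q`, of degree `d - 1`,
vanishes there, so `Q = 0` by induction. Both reductions only see which nodes lie on which forms.
-/

open MvPolynomial

namespace MvPolynomial

variable {R σ : Type*}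

theorem eval_bind₁ {τ : Type*} [CommSemiring R] (w : τ → R) (Φ : σ → MvPolynomial τ R)
    (P : MvPolynomial σ R) : eval w (bind₁ Φ P) = eval (fun i => eval w (Φ i)) P :=
  aeval_bind₁ w Φ P

theorem IsHomogeneous.eval_smul [CommSemiring R] {P : MvPolynomial σ R} {d : ℕ}
    (hP : P.IsHomogeneous d) (c : R) (v : σ → R) :
    eval (c • v) P = c ^ d * eval v P := by
  rw [eval_eq, eval_eq, Finset.mul_sum]
  refine Finset.sum_congr rfl fun m hm => ?_
  simp_rw [Pi.smul_apply, smul_eq_mul, mul_pow, Finset.prod_mul_distrib,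
    Finset.prod_pow_eq_pow_sum]
  rw [← hP (mem_support_iff.1 hm), Finsupp.weight_apply]
  simp only [Finsupp.sum, Pi.one_apply, smul_eq_mul, mul_one]
  ring

theorem IsHomogeneous.exists_eq_sum_smul_X [CommSemiring R] [Fintype σ] {L : MvPolynomial σ R}
    (hL : L.IsHomogeneous 1) : ∃ c : σ → R, ∑ i, c i • X i = L := by
  have := (mem_homogeneousSubmodule 1 L).2 hL
  rwa [homogeneousSubmodule_one_eq_span_X, Submodule.mem_span_range_iff_exists_fun] at this

theorem IsHomogeneous.eq_zero_of_eval_eq_zero_of_degree_zero [CommSemiring R]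
    {P : MvPolynomial σ R} (hP : P.IsHomogeneous 0) {v : σ → R} (hPv : eval v P = 0) : P = 0 := by
  rw [totalDegree_eq_zero_iff_eq_C.1 ((totalDegree_zero_iff_isHomogeneous σ).2 hP)] at hPv ⊢
  rw [eval_C] at hPv
  rw [hPv, C_0]

attribute [local instance] MvPolynomial.gradedAlgebra in
theorem IsHomogeneous.of_mul_left [CommRing R] [IsDomain R] {L Q : MvPolynomial σ R} {i e : ℕ}
    (hL : L.IsHomogeneous i) (hL0 : L ≠ 0) (hLQ : (L * Q).IsHomogeneous (i + e)) :
    Q.IsHomogeneous e := by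
  have h := DirectSum.coe_decompose_mul_add_of_left_mem (homogeneousSubmodule σ R) (j := e)
    (b := Q) ((mem_homogeneousSubmodule i L).2 hL)
  rw [DirectSum.decompose, Equiv.coe_fn_mk, decomposition.decompose'_apply,
    decomposition.decompose'_apply, homogeneousComponent_eq_self hLQ] at h
  rw [mul_left_cancel₀ hL0 h]
  exact homogeneousComponent_isHomogeneous e Q

variable {K : Type*} [Field K]

theorem IsHomogeneous.eq_zero_of_eval_eq_zero_of_fin_one [Infinite K]
    {P : MvPolynomial (Fin 1) K} {d : ℕ} (hP : P.IsHomogeneous d) {v : Fin 1 → K} (hv : v ≠ 0)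
    (hPv : eval v P = 0) : P = 0 := by
  have hv0 : v 0 ≠ 0 := fun h => hv <| by
    ext i
    rwa [Subsingleton.elim i 0]
  refine hP.eq_zero_of_forall_eval_eq_zero fun u => ?_
  have hu : u = (u 0 / v 0) • v := by
    ext i
    rw [Subsingleton.elim i 0, Pi.smul_apply, smul_eq_mul, div_mul_cancel₀ _ hv0]
  rw [hu, hP.eval_smul, hPv, mul_zero]

theorem IsHomogeneous.dvd_of_eval_eq_zero [Infinite K] [Fintype σ] {L P : MvPolynomial σ K}
    (hL : L.IsHomogeneous 1) (hL0 : L ≠ 0) (hP : ∀ v, eval v L = 0 → eval v P = 0) :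
    L ∣ P := by
  classical
  obtain ⟨c, hc⟩ := hL.exists_eq_sum_smul_X
  obtain ⟨j, hj⟩ : ∃ j, c j ≠ 0 := by
    by_contra! h
    simp [← hc, h] at hL0
  -- `Ψ` projects along the `j`-th axis onto the hyperplane `L = 0`, and is the identity mod `L`
  let Ψ : σ → MvPolynomial σ K := fun i => X i - if i = j then C (c j)⁻¹ * L else 0
  have hΨ : bind₁ Ψ P = 0 := MvPolynomial.funext fun v => by
    rw [eval_bind₁, map_zero]
    apply hP
    simp [Ψ, ← hc, mul_sub, Finset.sum_sub_distrib, apply_ite (eval v), hj]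
  have hΨL : L ∣ P - bind₁ Ψ P := by
    rw [← Ideal.mem_span_singleton, ← Ideal.Quotient.eq]
    have : (Ideal.Quotient.mkₐ K (Ideal.span {L})).comp (bind₁ Ψ) = Ideal.Quotient.mkₐ K _ := by
      refine algHom_ext fun i => ?_
      simp only [AlgHom.comp_apply, bind₁_X_right, Ideal.Quotient.mkₐ_eq_mk, Ideal.Quotient.eq,
        Ψ]
      split_ifs <;> simp [Ideal.mul_mem_left]
    exact (DFunLike.congr_fun this P).symm
  simpa [hΨ] using hΨL

theorem IsHomogeneous.exists_linear_parametrization {m : ℕ} {L : MvPolynomial (Fin (m + 1)) K}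
    (hL : L.IsHomogeneous 1) (hL0 : L ≠ 0) :
    ∃ Φ : Fin (m + 1) → MvPolynomial (Fin m) K, (∀ i, (Φ i).IsHomogeneous 1) ∧
      ∀ u, eval u L = 0 → ∃ w, (fun i => eval w (Φ i)) = u := by
  obtain ⟨c, rfl⟩ := hL.exists_eq_sum_smul_X
  obtain ⟨j, hj⟩ : ∃ j, c j ≠ 0 := by
    by_contra! h
    simp [h] at hL0
  -- solve `L = 0` for the `j`-th coordinate
  refine ⟨j.insertNth (C (-(c j)⁻¹) * ∑ k, c (j.succAbove k) • X k) X, fun i => ?_,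
    fun u hu => ⟨u ∘ j.succAbove, _root_.funext fun i => ?_⟩⟩
  · induction i using j.succAboveCases with
    | x =>
      rw [Fin.insertNth_apply_same]
      refine (IsHomogeneous.sum _ _ _ fun k _ => ?_).C_mul _
      rw [smul_eq_C_mul]
      exact isHomogeneous_C_mul_X _ _
    | p k => simpa using isHomogeneous_X K k
  · induction i using j.succAboveCases with
    | x =>
      rw [Fin.sum_univ_succAbove _ j] at hu
      simp only [map_add, map_sum, map_neg, map_mul, smul_eval, eval_X, eval_C, neg_mul,
        Fin.insertNth_apply_same, Function.comp_apply] at hu ⊢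
      field_simp
      linear_combination -hu
    | p k => simp

end MvPolynomial

section

variable {K : Type*} [Field K]

/-- A cage, with condition (i) weakened to: `p I` lies on its own forms `L j (I j)`. -/
structure IsWeakCage {κ ι σ : Type*} (L : κ → ι → MvPolynomial σ K) (p : (κ → ι) → σ → K) :
    Prop where
  isHomogeneous : ∀ j i, (L j i).IsHomogeneous 1
  ne_zero : ∀ I, p I ≠ 0
  eval_eq_zero_iff : ∀ j i I, eval (p I) (L j i) = 0 ↔ i = I j

namespace IsWeakCage

variable {κ ι σ : Type*} {L : κ → ι → MvPolynomial σ K} {p : (κ → ι) → σ → K}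

theorem form_ne_zero [Nontrivial ι] (hLp : IsWeakCage L p) (j : κ) (i : ι) : L j i ≠ 0 := by
  obtain ⟨i', hi'⟩ := exists_ne i
  intro h
  exact hi' ((hLp.eval_eq_zero_iff j i fun _ => i').1 (by rw [h, map_zero])).symm

theorem reindex {ι' : Type*} (hLp : IsWeakCage L p) {f : κ → ι' → ι}
    (hf : ∀ j, Function.Injective (f j)) :
    IsWeakCage (fun j i => L j (f j i)) (fun I => p fun j => f j (I j)) where
  isHomogeneous j _ := hLp.isHomogeneous j _
  ne_zero _ := hLp.ne_zero _
  eval_eq_zero_iff j _ _ := (hLp.eval_eq_zero_iff j _ _).trans (hf j).eq_iff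

theorem tail {m : ℕ} {L : Fin (m + 1) → ι → MvPolynomial σ K} {p : (Fin (m + 1) → ι) → σ → K}
    (hLp : IsWeakCage L p) (i₀ : ι) :
    IsWeakCage (fun j i => L j.succ i) (fun I => p (Fin.cons i₀ I)) where
  isHomogeneous j i := hLp.isHomogeneous j.succ i
  ne_zero _ := hLp.ne_zero _
  eval_eq_zero_iff j i I := by simpa using hLp.eval_eq_zero_iff j.succ i (Fin.cons i₀ I)

theorem pullback {τ : Type*} (hLp : IsWeakCage L p) {Φ : σ → MvPolynomial τ K}
    (hΦ : ∀ i, (Φ i).IsHomogeneous 1) {q : (κ → ι) → τ → K}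
    (hq : ∀ I, (fun i => eval (q I) (Φ i)) = p I) :
    IsWeakCage (fun j i => bind₁ Φ (L j i)) q where
  isHomogeneous j i := by simpa [aeval_eq_bind₁] using (hLp.isHomogeneous j i).aeval Φ hΦ
  ne_zero I hI := hLp.ne_zero I <| by
    rw [← hq I, hI]
    exact _root_.funext fun i => by simpa using (hΦ i).eval_smul 0 0
  eval_eq_zero_iff j i I := by rw [eval_bind₁, hq]; exact hLp.eval_eq_zero_iff j i I

end IsWeakCage

variable (K) in
def SimplicialUnisolvent (n d : ℕ) : Prop :=
  ∀ (L : Fin n → Fin (d + 1) → MvPolynomial (Fin (n + 1)) K) (p), IsWeakCage L p →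
    ∀ P : MvPolynomial (Fin (n + 1)) K, P.IsHomogeneous d →
      (∀ I : Fin n → Fin (d + 1), ∑ j, (I j : ℕ) ≤ d → eval (p I) P = 0) → P = 0

theorem simplicialUnisolvent_zero_left [Infinite K] (d : ℕ) : SimplicialUnisolvent K 0 d :=
  fun _ p hLp _ hP hvan =>
    hP.eq_zero_of_eval_eq_zero_of_fin_one (hLp.ne_zero _) (hvan finZeroElim (by simp))

theorem simplicialUnisolvent_zero_right (n : ℕ) : SimplicialUnisolvent K n 0 :=
  fun _ _ _ _ hP hvan => hP.eq_zero_of_eval_eq_zero_of_degree_zero (hvan 0 (by simp))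

theorem IsWeakCage.form_dvd_of_eval_eq_zero [Infinite K] {m d : ℕ}
    {L : Fin (m + 1) → Fin (d + 2) → MvPolynomial (Fin (m + 2)) K}
    {p : (Fin (m + 1) → Fin (d + 2)) → Fin (m + 2) → K} (hLp : IsWeakCage L p)
    (hm : SimplicialUnisolvent K m (d + 1)) {P : MvPolynomial (Fin (m + 2)) K}
    (hP : P.IsHomogeneous (d + 1))
    (hvan : ∀ I : Fin m → Fin (d + 2), ∑ j, (I j : ℕ) ≤ d + 1 →
      eval (p (Fin.cons 0 I)) P = 0) :
    L 0 0 ∣ P := by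
  obtain ⟨Φ, hΦ, hsurj⟩ :=
    (hLp.isHomogeneous 0 0).exists_linear_parametrization (hLp.form_ne_zero 0 0)
  choose q hq using fun I => hsurj _ ((hLp.eval_eq_zero_iff 0 0 (Fin.cons 0 I)).2 rfl)
  have hrestrict : bind₁ Φ P = 0 := by
    refine hm _ q ((hLp.tail 0).pullback hΦ hq) _ ?_ fun I hI => ?_
    · simpa [aeval_eq_bind₁] using hP.aeval Φ hΦ
    · rw [eval_bind₁, hq]
      exact hvan I hI
  refine (hLp.isHomogeneous 0 0).dvd_of_eval_eq_zero (hLp.form_ne_zero 0 0) fun u hu => ?_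
  obtain ⟨w, rfl⟩ := hsurj u hu
  rw [← eval_bind₁, hrestrict, map_zero]

theorem simplicialUnisolvent_succ_succ [Infinite K] {m e : ℕ}
    (hm : SimplicialUnisolvent K m (e + 1)) (he : SimplicialUnisolvent K (m + 1) e) :
    SimplicialUnisolvent K (m + 1) (e + 1) := by
  intro L p hLp P hP hvan
  obtain ⟨Q, rfl⟩ := hLp.form_dvd_of_eval_eq_zero hm hP fun I hI =>
    hvan _ (by simpa [Fin.sum_univ_succ] using hI)
  have hQ : Q.IsHomogeneous e :=
    (hLp.isHomogeneous 0 0).of_mul_left (hLp.form_ne_zero 0 0) (add_comm e 1 ▸ hP)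
  let shift : Fin (m + 1) → Fin (e + 1) → Fin (e + 2) := Fin.cons Fin.succ fun _ => Fin.castSucc
  have hshift : ∀ j, Function.Injective (shift j) :=
    Fin.cases (Fin.succ_injective _) fun _ => Fin.castSucc_injective _
  rw [he _ _ (hLp.reindex hshift) Q hQ fun I hI => ?_, mul_zero]
  have hsum : ∑ j, (shift j (I j) : ℕ) = ∑ j, (I j : ℕ) + 1 := by
    simp only [shift, Fin.sum_univ_succ, Fin.cons_zero, Fin.cons_succ, Fin.val_succ,
      Fin.val_castSucc]
    ring
  have h := hvan (fun j => shift j (I j)) (by omega)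
  rw [map_mul] at h
  exact (mul_eq_zero.1 h).resolve_left
    (mt (hLp.eval_eq_zero_iff _ _ _).1 (Fin.succ_ne_zero (I 0)).symm)

theorem simplicialUnisolvent [Infinite K] (n d : ℕ) : SimplicialUnisolvent K n d := by
  induction n generalizing d with
  | zero => exact simplicialUnisolvent_zero_left d
  | succ m ihm =>
    induction d with
    | zero => exact simplicialUnisolvent_zero_right _
    | succ e ihe => exact simplicialUnisolvent_succ_succ (ihm _) ihe

end

theorem vanish_on_simplicial_of_larger_cage_implies_zero_general
    {K : Type*} [Field K] [Infinite K] (n d : ℕ)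
    (L : Fin n → Fin (d + 1) → MvPolynomial (Fin (n + 1)) K)
    (hL : ∀ j i, (L j i).IsHomogeneous 1)
    (p : (Fin n → Fin (d + 1)) → Fin (n + 1) → K)
    (hp0 : ∀ I, p I ≠ 0)
    (hline : ∀ (I : Fin n → Fin (d + 1)) (v : Fin (n + 1) → K),
      (∀ j, MvPolynomial.eval v (L j (I j)) = 0) ↔ ∃ c : K, v = c • p I)
    (hne : ∀ (j : Fin n) (i : Fin (d + 1)) (I : Fin n → Fin (d + 1)),
      i ≠ I j → MvPolynomial.eval (p I) (L j i) ≠ 0)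
    (P : MvPolynomial (Fin (n + 1)) K) (hP : P.IsHomogeneous d)
    (hvan : ∀ I : Fin n → Fin (d + 1), (∑ j, (I j : ℕ)) ≤ d →
      MvPolynomial.eval (p I) P = 0) :
    P = 0 := by
  have hLp : IsWeakCage L p :=
    ⟨hL, hp0, fun j i I => ⟨not_imp_not.1 (hne j i I), fun h =>
      h ▸ (hline I (p I)).2 ⟨1, (one_smul K _).symm⟩ j⟩⟩
  exact simplicialUnisolvent n d L p hLp P hP hvan

/-- No nonzero homogeneous polynomial of degree `d` vanishes on a simplicial set
of nodes of a `(d+1)^{n}`-cage. -/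
theorem vanish_on_simplicial_of_larger_cage_implies_zero
    {K : Type*} [Field K] [Infinite K] (n d : ℕ) (hn : 1 ≤ n) (hd : 1 ≤ d)
    (L : Fin n → Fin (d + 1) → MvPolynomial (Fin (n + 1)) K)
    (hL : ∀ j i, (L j i).IsHomogeneous 1)
    (p : (Fin n → Fin (d + 1)) → Fin (n + 1) → K)
    (hp0 : ∀ I, p I ≠ 0)
    (hind : ∀ I : Fin n → Fin (d + 1), LinearIndependent K fun j => L j (I j))
    (hline : ∀ (I : Fin n → Fin (d + 1)) (v : Fin (n + 1) → K),
      (∀ j, MvPolynomial.eval v (L j (I j)) = 0) ↔ ∃ c : K, v = c • p I)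
    (hne : ∀ (j : Fin n) (i : Fin (d + 1)) (I : Fin n → Fin (d + 1)),
      i ≠ I j → MvPolynomial.eval (p I) (L j i) ≠ 0)
    (P : MvPolynomial (Fin (n + 1)) K) (hP : P.IsHomogeneous d)
    (hvan : ∀ I : Fin n → Fin (d + 1), (∑ j, (I j : ℕ)) ≤ d →
      MvPolynomial.eval (p I) P = 0) :
    P = 0 :=
  vanish_on_simplicial_of_larger_cage_implies_zero_general n d L hL p hp0 hline hne P hP hvan
end

section
/- Let K be a field, let n ≥ 1, d ≥ 1, and fix a d^{n}-cage over K with nodes p_I and products 𝓛_j = ∏_{i=1}^d L_{j,i}. Then: (a) for every nonzero v ∈ K^{n+1} with 𝓛_j(v) = 0 for all j ∈ {1,…,n}, there exists I ∈ {1,…,d}^n such that v ∈ K·p_I; and (b) for I ≠ J in {1,…,d}^n, the vectors p_I and p_J are not proportional. Consequently, the map I ↦ K·p_I is a bijection from {1,…,d}^n onto the set of lines through the origin contained in the common zero set of 𝓛_1,…,𝓛_n; in particular the common projective zero locus of 𝓛_1,…,𝓛_n consists of exactly d^n points. -/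
lemma aux_eval_smul {K : Type*} [CommSemiring K] {σ : Type*} {φ : MvPolynomial σ K} {m : ℕ}
    (h : φ.IsHomogeneous m) (c : K) (v : σ → K) :
    MvPolynomial.eval (c • v) φ = c ^ m * MvPolynomial.eval v φ := by
  rw [MvPolynomial.eval_eq, MvPolynomial.eval_eq, Finset.mul_sum]
  apply Finset.sum_congr rfl
  intro s hs
  have hdeg : s.degree = m := by
    have := h (MvPolynomial.mem_support_iff.mp hs)
    rwa [Finsupp.degree_eq_weight_one]
  have : (∏ i ∈ s.support, (c • v) i ^ s i)
      = c ^ m * ∏ i ∈ s.support, v i ^ s i := by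
    simp only [Pi.smul_apply, smul_eq_mul, mul_pow]
    rw [Finset.prod_mul_distrib, Finset.prod_pow_eq_pow_sum]
    congr 1
    rw [← hdeg]
    rfl
  rw [this]; ring

/-- The node set of a `d^{n}`-cage is exactly the common zero locus of the
products `𝓛_j = ∏ i, L j i`: every nonzero common zero is proportional to some
node, distinct nodes are non-proportional, the map `I ↦ K·p_I` is a bijection
onto the set of lines through the origin in the common zero set, and this common
projective zero locus consists of exactly `d^n` points. -/
theorem nodes_are_common_zero_locus
    {K : Type*} [Field K] (n d : ℕ) (hn : 1 ≤ n) (hd : 1 ≤ d)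
    (L : Fin n → Fin d → MvPolynomial (Fin (n + 1)) K)
    (hL : ∀ j i, (L j i).IsHomogeneous 1)
    (p : (Fin n → Fin d) → Fin (n + 1) → K)
    (hp0 : ∀ I, p I ≠ 0)
    (hind : ∀ I : Fin n → Fin d, LinearIndependent K fun j => L j (I j))
    (hline : ∀ (I : Fin n → Fin d) (v : Fin (n + 1) → K),
      (∀ j, MvPolynomial.eval v (L j (I j)) = 0) ↔ ∃ c : K, v = c • p I)
    (hne : ∀ (j : Fin n) (i : Fin d) (I : Fin n → Fin d),
      i ≠ I j → MvPolynomial.eval (p I) (L j i) ≠ 0) :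
    (∀ v : Fin (n + 1) → K, v ≠ 0 →
        (∀ j, MvPolynomial.eval v (∏ i, L j i) = 0) →
        ∃ (I : Fin n → Fin d) (c : K), v = c • p I) ∧
    (∀ I J : Fin n → Fin d, I ≠ J → ¬ ∃ c : K, p I = c • p J) ∧
    Set.BijOn (fun I : Fin n → Fin d => Submodule.span K {p I}) Set.univ
      {W : Submodule K (Fin (n + 1) → K) | ∃ v : Fin (n + 1) → K, v ≠ 0 ∧
        W = Submodule.span K {v} ∧
        ∀ j, MvPolynomial.eval v (∏ i, L j i) = 0} ∧
    {W : Submodule K (Fin (n + 1) → K) | ∃ v : Fin (n + 1) → K, v ≠ 0 ∧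
        W = Submodule.span K {v} ∧
        ∀ j, MvPolynomial.eval v (∏ i, L j i) = 0}.ncard = d ^ n := by
  -- Nodes vanish on the linear forms of their own colors
  have hpI0 : ∀ (I : Fin n → Fin d) (j : Fin n),
      MvPolynomial.eval (p I) (L j (I j)) = 0 := by
    intro I j
    exact ((hline I (p I)).mpr ⟨1, by simp⟩) j
  -- (a)
  have ha : ∀ v : Fin (n + 1) → K, v ≠ 0 →
      (∀ j, MvPolynomial.eval v (∏ i, L j i) = 0) →
      ∃ (I : Fin n → Fin d) (c : K), v = c • p I := by
    intro v hv hz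
    have hchoice : ∀ j : Fin n, ∃ i : Fin d, MvPolynomial.eval v (L j i) = 0 := by
      intro j
      have := hz j
      rw [map_prod] at this
      obtain ⟨i, _, hi⟩ := Finset.prod_eq_zero_iff.mp this
      exact ⟨i, hi⟩
    choose I hI using hchoice
    exact ⟨I, (hline I v).mp hI⟩
  -- (b)
  have hb : ∀ I J : Fin n → Fin d, I ≠ J → ¬ ∃ c : K, p I = c • p J := by
    intro I J hIJ ⟨c, hc⟩
    obtain ⟨j, hj⟩ := Function.ne_iff.mp hIJ
    have hc0 : c ≠ 0 := by
      rintro rfl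
      exact hp0 I (by simpa using hc)
    have h1 : MvPolynomial.eval (p I) (L j (I j)) = 0 := hpI0 I j
    rw [hc, aux_eval_smul (hL j (I j)) c (p J), pow_one] at h1
    exact hne j (I j) J hj (by
      rcases mul_eq_zero.mp h1 with h | h
      · exact absurd h hc0
      · exact h)
  -- membership of nodes in the zero-locus set
  have hmem : ∀ I : Fin n → Fin d,
      Submodule.span K {p I} ∈
        {W : Submodule K (Fin (n + 1) → K) | ∃ v : Fin (n + 1) → K, v ≠ 0 ∧
          W = Submodule.span K {v} ∧
          ∀ j, MvPolynomial.eval v (∏ i, L j i) = 0} := by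
    intro I
    refine ⟨p I, hp0 I, rfl, fun j => ?_⟩
    rw [map_prod]
    exact Finset.prod_eq_zero (Finset.mem_univ (I j)) (hpI0 I j)
  -- injectivity
  have hinj : Set.InjOn (fun I : Fin n → Fin d => Submodule.span K {p I}) Set.univ := by
    intro I _ J _ h
    by_contra hIJ
    apply hb I J hIJ
    have : p I ∈ Submodule.span K {p J} := by
      have h' : Submodule.span K {p I} = Submodule.span K {p J} := h
      rw [← h']; exact Submodule.mem_span_singleton_self _
    obtain ⟨c, hc⟩ := Submodule.mem_span_singleton.mp this
    exact ⟨c, hc.symm⟩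
  -- bijectivity
  have hbij : Set.BijOn (fun I : Fin n → Fin d => Submodule.span K {p I}) Set.univ
      {W : Submodule K (Fin (n + 1) → K) | ∃ v : Fin (n + 1) → K, v ≠ 0 ∧
        W = Submodule.span K {v} ∧
        ∀ j, MvPolynomial.eval v (∏ i, L j i) = 0} := by
    refine ⟨fun I _ => hmem I, hinj, ?_⟩
    rintro W ⟨v, hv, rfl, hz⟩
    obtain ⟨I, c, hc⟩ := ha v hv hz
    have hc0 : c ≠ 0 := by
      rintro rfl
      exact hv (by simpa using hc)
    refine ⟨I, Set.mem_univ _, ?_⟩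
    simp only
    rw [hc]
    exact (Submodule.span_singleton_smul_eq (IsUnit.mk0 c hc0) (p I)).symm
  refine ⟨ha, hb, hbij, ?_⟩
  rw [← hbij.image_eq, Set.ncard_image_of_injOn hinj, Set.ncard_univ]
  simp [Nat.card_eq_fintype_card]
end

section
/- Let K be an infinite field, let n ≥ 1, and fix a 2^{n}-cage over K (d = 2). If P ∈ K[x_0,…,x_n] is homogeneous of degree 2 and P(p_I) = 0 for every I ∈ {1,2}^n with ∑_{j=1}^n (I_j − 1) ≤ 2 (a supra-simplicial set of (n² + n + 2)/2 nodes), then P(p_I) = 0 for all 2^n nodes p_I, I ∈ {1,2}^n. -/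
private lemma finsupp_deg_one {K : Type*} [CommSemiring K] {N : ℕ} (d : Fin N →₀ ℕ)
    (hd : Finsupp.degree d = 1) :
    ∃ s : Fin N, ∀ v : Fin N → K, (d.prod fun i k => v i ^ k) = v s := by
  obtain ⟨s, hs⟩ : ∃ s, d s ≠ 0 := by
    by_contra h
    push_neg at h
    have : d = 0 := Finsupp.ext fun a => h a
    simp [this, map_zero] at hd
  have hs1 : d s = 1 := by
    have := Finsupp.le_degree s d
    omega
  have hother : ∀ b, b ≠ s → d b = 0 := by
    intro b hb
    by_contra hb0
    have hsb : ({s, b} : Finset (Fin N)) ⊆ d.support := by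
      intro x hx
      simp only [Finset.mem_insert, Finset.mem_singleton] at hx
      rcases hx with rfl | rfl <;> simp [Finsupp.mem_support_iff, hs, hb0]
    have h2 : d s + d b ≤ Finsupp.degree d := by
      rw [Finsupp.degree]
      calc d s + d b = ∑ x ∈ ({s, b} : Finset (Fin N)), d x := by
            rw [Finset.sum_pair (by exact fun h => hb h.symm)]
        _ ≤ _ := Finset.sum_le_sum_of_subset hsb
    omega
  refine ⟨s, fun v => ?_⟩
  rw [Finsupp.prod]
  rw [Finset.prod_eq_single s (fun b _ hb => by rw [hother b hb, pow_zero])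
      (fun h => absurd (Finsupp.mem_support_iff.mpr hs) h)]
  rw [hs1, pow_one]

private lemma finsupp_deg_two {K : Type*} [CommSemiring K] {N : ℕ} (d : Fin N →₀ ℕ)
    (hd : Finsupp.degree d = 2) :
    ∃ s t : Fin N, ∀ v : Fin N → K, (d.prod fun i k => v i ^ k) = v s * v t := by
  obtain ⟨s, hs⟩ : ∃ s, d s ≠ 0 := by
    by_contra h
    push_neg at h
    have : d = 0 := Finsupp.ext fun a => h a
    simp [this, map_zero] at hd
  have pair_le : ∀ a b : Fin N, a ≠ b → d a + d b ≤ Finsupp.degree d := by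
    intro a b hab
    by_cases ha : d a = 0
    · have := Finsupp.le_degree b d; omega
    by_cases hb : d b = 0
    · have := Finsupp.le_degree a d; omega
    have hsb : ({a, b} : Finset (Fin N)) ⊆ d.support := by
      intro x hx
      simp only [Finset.mem_insert, Finset.mem_singleton] at hx
      rcases hx with rfl | rfl <;> simp [Finsupp.mem_support_iff, ha, hb]
    rw [Finsupp.degree]
    calc d a + d b = ∑ x ∈ ({a, b} : Finset (Fin N)), d x := by
          rw [Finset.sum_pair hab]
      _ ≤ _ := Finset.sum_le_sum_of_subset hsb
  have hds : d s ≤ 2 := by have := Finsupp.le_degree s d; omega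
  rcases Nat.lt_or_ge (d s) 2 with hlt | hge
  · -- d s = 1, there is another t
    have hs1 : d s = 1 := by omega
    obtain ⟨t, hts, ht⟩ : ∃ t, t ≠ s ∧ d t ≠ 0 := by
      by_contra h
      push_neg at h
      have : d.support ⊆ {s} := by
        intro x hx
        simp only [Finset.mem_singleton]
        by_contra hxs
        exact (Finsupp.mem_support_iff.mp hx) (h x hxs)
      have : Finsupp.degree d ≤ d s := by
        rw [Finsupp.degree]
        calc ∑ x ∈ d.support, d x ≤ ∑ x ∈ ({s} : Finset (Fin N)), d x :=
              Finset.sum_le_sum_of_subset this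
          _ = d s := Finset.sum_singleton _ _
      omega
    have ht1 : d t = 1 := by have := pair_le s t (fun h => hts h.symm); omega
    have hother : ∀ b, b ≠ s → b ≠ t → d b = 0 := by
      intro b hbs hbt
      by_contra hb0
      have h1 : d s + d b ≤ 2 := by have := pair_le s b (fun h => hbs h.symm); omega
      have hsb : ({s, t, b} : Finset (Fin N)) ⊆ d.support := by
        intro x hx
        simp only [Finset.mem_insert, Finset.mem_singleton] at hx
        rcases hx with rfl | rfl | rfl <;> simp [Finsupp.mem_support_iff, hs, ht, hb0]
      have h3 : d s + d t + d b ≤ Finsupp.degree d := by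
        rw [Finsupp.degree]
        calc d s + d t + d b = ∑ x ∈ ({s, t, b} : Finset (Fin N)), d x := by
              rw [Finset.sum_insert (by simp [hts.symm, Ne.symm hbs]),
                Finset.sum_pair hbt.symm]
              ring
          _ ≤ _ := Finset.sum_le_sum_of_subset hsb
      omega
    refine ⟨s, t, fun v => ?_⟩
    rw [Finsupp.prod]
    have hsub : d.support ⊆ {s, t} := by
      intro x hx
      simp only [Finset.mem_insert, Finset.mem_singleton]
      by_contra hxx
      push_neg at hxx
      exact (Finsupp.mem_support_iff.mp hx) (hother x hxx.1 hxx.2)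
    rw [Finset.prod_subset hsub (fun x _ hx => by
      rw [Finsupp.notMem_support_iff.mp hx, pow_zero])]
    rw [Finset.prod_pair (fun h => hts h.symm), hs1, ht1, pow_one, pow_one]
  · -- d s = 2
    have hs2 : d s = 2 := by omega
    have hother : ∀ b, b ≠ s → d b = 0 := by
      intro b hb
      have := pair_le s b (fun h => hb h.symm); omega
    refine ⟨s, s, fun v => ?_⟩
    rw [Finsupp.prod]
    rw [Finset.prod_eq_single s (fun b _ hb => by rw [hother b hb, pow_zero])
        (fun h => absurd (Finsupp.mem_support_iff.mpr hs) h)]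
    rw [hs2, pow_two]

private lemma eval_lin_expand {K : Type*} [CommRing K] {N : ℕ}
    {Lp : MvPolynomial (Fin N) K} (hL : Lp.IsHomogeneous 1)
    (a b c d : K) (u v w z : Fin N → K) :
    MvPolynomial.eval (a • u + b • v + c • w + d • z) Lp
      = a * MvPolynomial.eval u Lp + b * MvPolynomial.eval v Lp
        + c * MvPolynomial.eval w Lp + d * MvPolynomial.eval z Lp := by
  have hdeg : ∀ e ∈ Lp.support, ∃ s : Fin N,
      ∀ x : Fin N → K, (e.prod fun i k => x i ^ k) = x s := fun e he =>
    finsupp_deg_one e (by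
      rw [Finsupp.degree_eq_weight_one]
      exact hL (MvPolynomial.mem_support_iff.mp he))
  choose s hs using hdeg
  rw [Lp.as_sum]
  simp only [map_sum, MvPolynomial.eval_monomial]
  rw [Finset.mul_sum, Finset.mul_sum, Finset.mul_sum, Finset.mul_sum,
    ← Finset.sum_add_distrib, ← Finset.sum_add_distrib, ← Finset.sum_add_distrib]
  refine Finset.sum_congr rfl fun e he => ?_
  simp only [hs e he]
  simp only [Pi.add_apply, Pi.smul_apply, smul_eq_mul]
  ring

private lemma eval_quad_expand {K : Type*} [CommRing K] {N : ℕ}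
    {P : MvPolynomial (Fin N) K} (hP : P.IsHomogeneous 2)
    (a b c d : K) (u v w z : Fin N → K) :
    MvPolynomial.eval (a • u + b • v + c • w + d • z) P
      = a ^ 2 * MvPolynomial.eval u P + b ^ 2 * MvPolynomial.eval v P
        + c ^ 2 * MvPolynomial.eval w P + d ^ 2 * MvPolynomial.eval z P
        + a * b * (MvPolynomial.eval (u + v) P - MvPolynomial.eval u P - MvPolynomial.eval v P)
        + a * c * (MvPolynomial.eval (u + w) P - MvPolynomial.eval u P - MvPolynomial.eval w P)
        + a * d * (MvPolynomial.eval (u + z) P - MvPolynomial.eval u P - MvPolynomial.eval z P)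
        + b * c * (MvPolynomial.eval (v + w) P - MvPolynomial.eval v P - MvPolynomial.eval w P)
        + b * d * (MvPolynomial.eval (v + z) P - MvPolynomial.eval v P - MvPolynomial.eval z P)
        + c * d * (MvPolynomial.eval (w + z) P - MvPolynomial.eval w P - MvPolynomial.eval z P)
        := by
  have hdeg : ∀ e ∈ P.support, ∃ s t : Fin N,
      ∀ x : Fin N → K, (e.prod fun i k => x i ^ k) = x s * x t := fun e he =>
    finsupp_deg_two e (by
      rw [Finsupp.degree_eq_weight_one]
      exact hP (MvPolynomial.mem_support_iff.mp he))
  choose s t hs using hdeg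
  rw [P.as_sum]
  simp only [map_sum, MvPolynomial.eval_monomial]
  simp only [Finset.mul_sum, ← Finset.sum_sub_distrib, ← Finset.sum_add_distrib]
  refine Finset.sum_congr rfl fun e he => ?_
  simp only [hs e he]
  simp only [Pi.add_apply, Pi.smul_apply, smul_eq_mul]
  ring

/-- **Varieties in the cube cage.** A quadric vanishing at the
`(n² + n + 2)/2` nodes of a supra-simplicial set of a `2^{n}`-cage vanishes at
all `2^n` nodes. -/
theorem quadric_through_supra_simplicial_nodes_of_cube_cage
    {K : Type*} [Field K] [Infinite K] (n : ℕ) (hn : 1 ≤ n)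
    (L : Fin n → Fin 2 → MvPolynomial (Fin (n + 1)) K)
    (hL : ∀ j i, (L j i).IsHomogeneous 1)
    (p : (Fin n → Fin 2) → Fin (n + 1) → K)
    (hp0 : ∀ I, p I ≠ 0)
    (hind : ∀ I : Fin n → Fin 2, LinearIndependent K fun j => L j (I j))
    (hline : ∀ (I : Fin n → Fin 2) (v : Fin (n + 1) → K),
      (∀ j, MvPolynomial.eval v (L j (I j)) = 0) ↔ ∃ c : K, v = c • p I)
    (hne : ∀ (j : Fin n) (i : Fin 2) (I : Fin n → Fin 2),
      i ≠ I j → MvPolynomial.eval (p I) (L j i) ≠ 0)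
    (P : MvPolynomial (Fin (n + 1)) K) (hP : P.IsHomogeneous 2)
    (hvan : ∀ I : Fin n → Fin 2, (∑ j, (I j : ℕ)) ≤ 2 →
      MvPolynomial.eval (p I) P = 0) :
    ∀ I : Fin n → Fin 2, MvPolynomial.eval (p I) P = 0 := by
  suffices H : ∀ w : ℕ, ∀ I : Fin n → Fin 2, (∑ j, (I j : ℕ)) = w →
      MvPolynomial.eval (p I) P = 0 by
    intro I; exact H _ I rfl
  intro w
  induction w using Nat.strong_induction_on with
  | _ w IH =>
  intro I hw
  by_cases hw2 : (∑ j, (I j : ℕ)) ≤ 2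
  · exact hvan I hw2
  push_neg at hw2
  -- pick three distinct colors where I takes the value 1
  have hsumT : (∑ j, (I j : ℕ)) = (Finset.univ.filter (fun j => I j = 1)).card := by
    rw [Finset.card_filter]
    refine Finset.sum_congr rfl fun j _ => ?_
    by_cases h : I j = 1
    · simp [h]
    · have h2 : (I j : ℕ) < 2 := (I j).isLt
      have h1 : (I j : ℕ) ≠ 1 := fun hc => h (Fin.ext hc)
      simp only [h, if_false]
      omega
  obtain ⟨j1, hj1T⟩ := Finset.card_pos.mp
    (show 0 < (Finset.univ.filter (fun j => I j = 1)).card by omega)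
  have hcE1 := Finset.card_erase_of_mem hj1T
  obtain ⟨j2, hj2E⟩ := Finset.card_pos.mp
    (show 0 < ((Finset.univ.filter (fun j => I j = 1)).erase j1).card by omega)
  have hne21 : j2 ≠ j1 := Finset.ne_of_mem_erase hj2E
  have hj2T := Finset.mem_of_mem_erase hj2E
  have hcE2 := Finset.card_erase_of_mem hj2E
  obtain ⟨j3, hj3E⟩ := Finset.card_pos.mp
    (show 0 < (((Finset.univ.filter (fun j => I j = 1)).erase j1).erase j2).card by omega)
  have hne32 : j3 ≠ j2 := Finset.ne_of_mem_erase hj3E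
  have hj3E1 := Finset.mem_of_mem_erase hj3E
  have hne31 : j3 ≠ j1 := Finset.ne_of_mem_erase hj3E1
  have hj3T := Finset.mem_of_mem_erase hj3E1
  have hI1 : I j1 = 1 := (Finset.mem_filter.mp hj1T).2
  have hI2 : I j2 = 1 := (Finset.mem_filter.mp hj2T).2
  have hI3 : I j3 = 1 := (Finset.mem_filter.mp hj3T).2
  -- the flip function on three chosen colors
  set Jf : Fin 2 → Fin 2 → Fin 2 → Fin n → Fin 2 := fun b0 b1 b2 k =>
    if k = j1 then b0 else if k = j2 then b1 else if k = j3 then b2 else I k with hJfd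
  have hJfj1 : ∀ b0 b1 b2, Jf b0 b1 b2 j1 = b0 := by intro b0 b1 b2; simp [hJfd]
  have hJfj2 : ∀ b0 b1 b2, Jf b0 b1 b2 j2 = b1 := by intro b0 b1 b2; simp [hJfd, hne21]
  have hJfj3 : ∀ b0 b1 b2, Jf b0 b1 b2 j3 = b2 := by
    intro b0 b1 b2; simp [hJfd, hne31, hne32]
  have hJfother : ∀ b0 b1 b2 k, k ≠ j1 → k ≠ j2 → k ≠ j3 → Jf b0 b1 b2 k = I k := by
    intro b0 b1 b2 k h1 h2 h3; simp [hJfd, h1, h2, h3]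
  have hJfI : Jf 1 1 1 = I := by
    funext k
    by_cases e1 : k = j1
    · subst e1; rw [hJfj1, hI1]
    by_cases e2 : k = j2
    · subst e2; rw [hJfj2, hI2]
    by_cases e3 : k = j3
    · subst e3; rw [hJfj3, hI3]
    exact hJfother 1 1 1 k e1 e2 e3
  -- weights
  have hsplit : ∀ f : Fin n → ℕ, ∑ k, f k
      = f j1 + (f j2 + (f j3 +
        ∑ k ∈ ((Finset.univ.erase j1).erase j2).erase j3, f k)) := by
    intro f
    rw [← Finset.add_sum_erase _ f (Finset.mem_univ j1),
      ← Finset.add_sum_erase _ f (Finset.mem_erase.mpr ⟨hne21, Finset.mem_univ j2⟩),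
      ← Finset.add_sum_erase _ f (Finset.mem_erase.mpr ⟨hne32,
        Finset.mem_erase.mpr ⟨hne31, Finset.mem_univ j3⟩⟩)]
  have hwR : w = 3 + ∑ k ∈ ((Finset.univ.erase j1).erase j2).erase j3, (I k : ℕ) := by
    rw [← hw, hsplit (fun k => (I k : ℕ))]
    rw [hI1, hI2, hI3]
    have hv1 : ((1 : Fin 2) : ℕ) = 1 := rfl
    rw [hv1]
    omega
  have hwt : ∀ b0 b1 b2 : Fin 2, (∑ k, ((Jf b0 b1 b2 k : ℕ)))
      = (b0 : ℕ) + (b1 : ℕ) + (b2 : ℕ)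
        + ∑ k ∈ ((Finset.univ.erase j1).erase j2).erase j3, (I k : ℕ) := by
    intro b0 b1 b2
    rw [hsplit (fun k => ((Jf b0 b1 b2 k : ℕ)))]
    rw [hJfj1, hJfj2, hJfj3]
    have htail : ∑ k ∈ ((Finset.univ.erase j1).erase j2).erase j3, ((Jf b0 b1 b2 k : ℕ))
        = ∑ k ∈ ((Finset.univ.erase j1).erase j2).erase j3, (I k : ℕ) := by
      refine Finset.sum_congr rfl fun k hk => ?_
      have h3 : k ≠ j3 := (Finset.mem_erase.mp hk).1
      have h2 : k ≠ j2 := (Finset.mem_erase.mp (Finset.mem_erase.mp hk).2).1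
      have h1 : k ≠ j1 :=
        (Finset.mem_erase.mp (Finset.mem_erase.mp (Finset.mem_erase.mp hk).2).2).1
      rw [hJfother b0 b1 b2 k h1 h2 h3]
    rw [htail]
    ring
  have hIH : ∀ b0 b1 b2 : Fin 2, ((b0 : ℕ) + (b1 : ℕ) + (b2 : ℕ)) ≤ 2 →
      MvPolynomial.eval (p (Jf b0 b1 b2)) P = 0 := by
    intro b0 b1 b2 hb
    refine IH _ ?_ (Jf b0 b1 b2) (hwt b0 b1 b2)
    have g0 := b0.isLt; have g1 := b1.isLt; have g2 := b2.isLt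
    omega
  -- basic evaluation facts at the eight nodes of the 3-face
  have hzero : ∀ (b0 b1 b2 : Fin 2) (j : Fin n),
      MvPolynomial.eval (p (Jf b0 b1 b2)) (L j (Jf b0 b1 b2 j)) = 0 := by
    intro b0 b1 b2
    exact (hline (Jf b0 b1 b2) (p (Jf b0 b1 b2))).mpr ⟨1, (one_smul K _).symm⟩
  have hnzero : ∀ (b0 b1 b2 : Fin 2) (j : Fin n) (i : Fin 2),
      i ≠ Jf b0 b1 b2 j → MvPolynomial.eval (p (Jf b0 b1 b2)) (L j i) ≠ 0 := by
    intro b0 b1 b2 j i h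
    exact hne j i (Jf b0 b1 b2) h
  -- coordinates of each node of the 3-face in terms of the four base nodes
  have hcoord : ∀ b0 b1 b2 : Fin 2, ∃ c : K, p (Jf b0 b1 b2)
      = c • p (Jf 0 0 0)
        + (MvPolynomial.eval (p (Jf b0 b1 b2)) (L j1 0)
            / MvPolynomial.eval (p (Jf 1 0 0)) (L j1 0)) • p (Jf 1 0 0)
        + (MvPolynomial.eval (p (Jf b0 b1 b2)) (L j2 0)
            / MvPolynomial.eval (p (Jf 0 1 0)) (L j2 0)) • p (Jf 0 1 0)
        + (MvPolynomial.eval (p (Jf b0 b1 b2)) (L j3 0)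
            / MvPolynomial.eval (p (Jf 0 0 1)) (L j3 0)) • p (Jf 0 0 1) := by
    intro b0 b1 b2
    have hall : ∀ j, MvPolynomial.eval
        ((1 : K) • p (Jf b0 b1 b2)
        + (-(MvPolynomial.eval (p (Jf b0 b1 b2)) (L j1 0)
            / MvPolynomial.eval (p (Jf 1 0 0)) (L j1 0))) • p (Jf 1 0 0)
        + (-(MvPolynomial.eval (p (Jf b0 b1 b2)) (L j2 0)
            / MvPolynomial.eval (p (Jf 0 1 0)) (L j2 0))) • p (Jf 0 1 0)
        + (-(MvPolynomial.eval (p (Jf b0 b1 b2)) (L j3 0)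
            / MvPolynomial.eval (p (Jf 0 0 1)) (L j3 0))) • p (Jf 0 0 1))
        (L j (Jf 0 0 0 j)) = 0 := by
      intro j
      rw [eval_lin_expand (hL j (Jf 0 0 0 j))]
      by_cases e1 : j = j1
      · rw [e1, hJfj1]
        have hz2 : MvPolynomial.eval (p (Jf 0 1 0)) (L j1 0) = 0 := by
          have := hzero 0 1 0 j1; rwa [hJfj1] at this
        have hz3 : MvPolynomial.eval (p (Jf 0 0 1)) (L j1 0) = 0 := by
          have := hzero 0 0 1 j1; rwa [hJfj1] at this
        have hd : MvPolynomial.eval (p (Jf 1 0 0)) (L j1 0) ≠ 0 :=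
          hnzero 1 0 0 j1 0 (by rw [hJfj1]; decide)
        rw [hz2, hz3]
        have hcan : MvPolynomial.eval (p (Jf b0 b1 b2)) (L j1 0)
            / MvPolynomial.eval (p (Jf 1 0 0)) (L j1 0)
            * MvPolynomial.eval (p (Jf 1 0 0)) (L j1 0)
            = MvPolynomial.eval (p (Jf b0 b1 b2)) (L j1 0) := div_mul_cancel₀ _ hd
        linear_combination -hcan
      by_cases e2 : j = j2
      · rw [e2, hJfj2]
        have hz1 : MvPolynomial.eval (p (Jf 1 0 0)) (L j2 0) = 0 := by
          have := hzero 1 0 0 j2; rwa [hJfj2] at this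
        have hz3 : MvPolynomial.eval (p (Jf 0 0 1)) (L j2 0) = 0 := by
          have := hzero 0 0 1 j2; rwa [hJfj2] at this
        have hd : MvPolynomial.eval (p (Jf 0 1 0)) (L j2 0) ≠ 0 :=
          hnzero 0 1 0 j2 0 (by rw [hJfj2]; decide)
        rw [hz1, hz3]
        have hcan : MvPolynomial.eval (p (Jf b0 b1 b2)) (L j2 0)
            / MvPolynomial.eval (p (Jf 0 1 0)) (L j2 0)
            * MvPolynomial.eval (p (Jf 0 1 0)) (L j2 0)
            = MvPolynomial.eval (p (Jf b0 b1 b2)) (L j2 0) := div_mul_cancel₀ _ hd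
        linear_combination -hcan
      by_cases e3 : j = j3
      · rw [e3, hJfj3]
        have hz1 : MvPolynomial.eval (p (Jf 1 0 0)) (L j3 0) = 0 := by
          have := hzero 1 0 0 j3; rwa [hJfj3] at this
        have hz2 : MvPolynomial.eval (p (Jf 0 1 0)) (L j3 0) = 0 := by
          have := hzero 0 1 0 j3; rwa [hJfj3] at this
        have hd : MvPolynomial.eval (p (Jf 0 0 1)) (L j3 0) ≠ 0 :=
          hnzero 0 0 1 j3 0 (by rw [hJfj3]; decide)
        rw [hz1, hz2]
        have hcan : MvPolynomial.eval (p (Jf b0 b1 b2)) (L j3 0)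
            / MvPolynomial.eval (p (Jf 0 0 1)) (L j3 0)
            * MvPolynomial.eval (p (Jf 0 0 1)) (L j3 0)
            = MvPolynomial.eval (p (Jf b0 b1 b2)) (L j3 0) := div_mul_cancel₀ _ hd
        linear_combination -hcan
      · rw [hJfother 0 0 0 j e1 e2 e3]
        have hz0 : MvPolynomial.eval (p (Jf b0 b1 b2)) (L j (I j)) = 0 := by
          have := hzero b0 b1 b2 j; rwa [hJfother b0 b1 b2 j e1 e2 e3] at this
        have hz1 : MvPolynomial.eval (p (Jf 1 0 0)) (L j (I j)) = 0 := by
          have := hzero 1 0 0 j; rwa [hJfother 1 0 0 j e1 e2 e3] at this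
        have hz2 : MvPolynomial.eval (p (Jf 0 1 0)) (L j (I j)) = 0 := by
          have := hzero 0 1 0 j; rwa [hJfother 0 1 0 j e1 e2 e3] at this
        have hz3 : MvPolynomial.eval (p (Jf 0 0 1)) (L j (I j)) = 0 := by
          have := hzero 0 0 1 j; rwa [hJfother 0 0 1 j e1 e2 e3] at this
        rw [hz0, hz1, hz2, hz3]
        ring
    obtain ⟨c, hc⟩ := (hline (Jf 0 0 0) _).mp hall
    refine ⟨c, ?_⟩
    rw [← hc]
    module
  -- coordinates of the four upper nodes
  obtain ⟨c2, hq110⟩ := hcoord 1 1 0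
  have z110 : MvPolynomial.eval (p (Jf 1 1 0)) (L j3 0) = 0 := by
    have := hzero 1 1 0 j3; rwa [hJfj3] at this
  rw [z110, zero_div] at hq110
  obtain ⟨c3, hq101⟩ := hcoord 1 0 1
  have z101 : MvPolynomial.eval (p (Jf 1 0 1)) (L j2 0) = 0 := by
    have := hzero 1 0 1 j2; rwa [hJfj2] at this
  rw [z101, zero_div] at hq101
  obtain ⟨c4, hq011⟩ := hcoord 0 1 1
  have z011 : MvPolynomial.eval (p (Jf 0 1 1)) (L j1 0) = 0 := by
    have := hzero 0 1 1 j1; rwa [hJfj1] at this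
  rw [z011, zero_div] at hq011
  obtain ⟨cA, hq111⟩ := hcoord 1 1 1
  -- vanishing of P at the seven base nodes
  have Q0 : MvPolynomial.eval (p (Jf 0 0 0)) P = 0 := hIH 0 0 0 (by decide)
  have Q1 : MvPolynomial.eval (p (Jf 1 0 0)) P = 0 := hIH 1 0 0 (by decide)
  have Q2 : MvPolynomial.eval (p (Jf 0 1 0)) P = 0 := hIH 0 1 0 (by decide)
  have Q3 : MvPolynomial.eval (p (Jf 0 0 1)) P = 0 := hIH 0 0 1 (by decide)
  have E1 := hIH 1 1 0 (by decide)
  rw [hq110, eval_quad_expand hP, Q0, Q1, Q2, Q3] at E1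
  have E2 := hIH 1 0 1 (by decide)
  rw [hq101, eval_quad_expand hP, Q0, Q1, Q2, Q3] at E2
  have E3 := hIH 0 1 1 (by decide)
  rw [hq011, eval_quad_expand hP, Q0, Q1, Q2, Q3] at E3
  -- vanishing of the matching linear forms
  have zl1 : MvPolynomial.eval (p (Jf 1 0 0)) (L j1 1) = 0 := by
    have := hzero 1 0 0 j1; rwa [hJfj1] at this
  have zl2 : MvPolynomial.eval (p (Jf 0 1 0)) (L j2 1) = 0 := by
    have := hzero 0 1 0 j2; rwa [hJfj2] at this
  have zl3 : MvPolynomial.eval (p (Jf 0 0 1)) (L j3 1) = 0 := by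
    have := hzero 0 0 1 j3; rwa [hJfj3] at this
  have h1 := hzero 1 1 1 j1
  rw [hJfj1, hq111, eval_lin_expand (hL j1 1), zl1] at h1
  have h2 := hzero 1 1 0 j1
  rw [hJfj1, hq110, eval_lin_expand (hL j1 1), zl1] at h2
  have h3 := hzero 1 0 1 j1
  rw [hJfj1, hq101, eval_lin_expand (hL j1 1), zl1] at h3
  have h4 := hzero 1 1 1 j2
  rw [hJfj2, hq111, eval_lin_expand (hL j2 1), zl2] at h4
  have h5 := hzero 1 1 0 j2
  rw [hJfj2, hq110, eval_lin_expand (hL j2 1), zl2] at h5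
  have h6 := hzero 0 1 1 j2
  rw [hJfj2, hq011, eval_lin_expand (hL j2 1), zl2] at h6
  have h7 := hzero 1 1 1 j3
  rw [hJfj3, hq111, eval_lin_expand (hL j3 1), zl3] at h7
  have h8 := hzero 1 0 1 j3
  rw [hJfj3, hq101, eval_lin_expand (hL j3 1), zl3] at h8
  have h9 := hzero 0 1 1 j3
  rw [hJfj3, hq011, eval_lin_expand (hL j3 1), zl3] at h9
  -- rewrite the goal
  rw [← hJfI, hq111, eval_quad_expand hP, Q0, Q1, Q2, Q3]
  -- name the scalar atoms
  set be1 := MvPolynomial.eval (p (Jf 1 1 0)) (L j1 0) / MvPolynomial.eval (p (Jf 1 0 0)) (L j1 0) with hbe1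
  set ga1 := MvPolynomial.eval (p (Jf 1 1 0)) (L j2 0) / MvPolynomial.eval (p (Jf 0 1 0)) (L j2 0) with hga1
  set be2 := MvPolynomial.eval (p (Jf 1 0 1)) (L j1 0) / MvPolynomial.eval (p (Jf 1 0 0)) (L j1 0) with hbe2
  set de2 := MvPolynomial.eval (p (Jf 1 0 1)) (L j3 0) / MvPolynomial.eval (p (Jf 0 0 1)) (L j3 0) with hde2
  set ga3 := MvPolynomial.eval (p (Jf 0 1 1)) (L j2 0) / MvPolynomial.eval (p (Jf 0 1 0)) (L j2 0) with hga3
  set de3 := MvPolynomial.eval (p (Jf 0 1 1)) (L j3 0) / MvPolynomial.eval (p (Jf 0 0 1)) (L j3 0) with hde3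
  set cB := MvPolynomial.eval (p (Jf 1 1 1)) (L j1 0) / MvPolynomial.eval (p (Jf 1 0 0)) (L j1 0) with hcB
  set cC := MvPolynomial.eval (p (Jf 1 1 1)) (L j2 0) / MvPolynomial.eval (p (Jf 0 1 0)) (L j2 0) with hcC
  set cD := MvPolynomial.eval (p (Jf 1 1 1)) (L j3 0) / MvPolynomial.eval (p (Jf 0 0 1)) (L j3 0) with hcD
  set r0 := MvPolynomial.eval (p (Jf 0 0 0)) (L j1 1) with hr0
  set s0 := MvPolynomial.eval (p (Jf 0 0 0)) (L j2 1) with hs0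
  set t0 := MvPolynomial.eval (p (Jf 0 0 0)) (L j3 1) with ht0
  set m01 := MvPolynomial.eval (p (Jf 0 0 0) + p (Jf 1 0 0)) P with hm01
  set m02 := MvPolynomial.eval (p (Jf 0 0 0) + p (Jf 0 1 0)) P with hm02
  set m03 := MvPolynomial.eval (p (Jf 0 0 0) + p (Jf 0 0 1)) P with hm03
  -- nonvanishing facts
  have nbe1 : be1 ≠ 0 := by
    rw [hbe1]
    exact div_ne_zero (hnzero 1 1 0 j1 0 (by rw [hJfj1]; decide))
      (hnzero 1 0 0 j1 0 (by rw [hJfj1]; decide))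
  have nga1 : ga1 ≠ 0 := by
    rw [hga1]
    exact div_ne_zero (hnzero 1 1 0 j2 0 (by rw [hJfj2]; decide))
      (hnzero 0 1 0 j2 0 (by rw [hJfj2]; decide))
  have nbe2 : be2 ≠ 0 := by
    rw [hbe2]
    exact div_ne_zero (hnzero 1 0 1 j1 0 (by rw [hJfj1]; decide))
      (hnzero 1 0 0 j1 0 (by rw [hJfj1]; decide))
  have nde2 : de2 ≠ 0 := by
    rw [hde2]
    exact div_ne_zero (hnzero 1 0 1 j3 0 (by rw [hJfj3]; decide))
      (hnzero 0 0 1 j3 0 (by rw [hJfj3]; decide))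
  have nga3 : ga3 ≠ 0 := by
    rw [hga3]
    exact div_ne_zero (hnzero 0 1 1 j2 0 (by rw [hJfj2]; decide))
      (hnzero 0 1 0 j2 0 (by rw [hJfj2]; decide))
  have nde3 : de3 ≠ 0 := by
    rw [hde3]
    exact div_ne_zero (hnzero 0 1 1 j3 0 (by rw [hJfj3]; decide))
      (hnzero 0 0 1 j3 0 (by rw [hJfj3]; decide))
  have nr0 : r0 ≠ 0 := by
    rw [hr0]; exact hnzero 0 0 0 j1 1 (by rw [hJfj1]; decide)
  have ns0 : s0 ≠ 0 := by
    rw [hs0]; exact hnzero 0 0 0 j2 1 (by rw [hJfj2]; decide)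
  have nt0 : t0 ≠ 0 := by
    rw [ht0]; exact hnzero 0 0 0 j3 1 (by rw [hJfj3]; decide)
  have hPi : be1 * ga1 * be2 * de2 * ga3 * de3 * r0 * s0 * t0 ≠ 0 := by
    exact mul_ne_zero (mul_ne_zero (mul_ne_zero (mul_ne_zero (mul_ne_zero (mul_ne_zero
      (mul_ne_zero (mul_ne_zero nbe1 nga1) nbe2) nde2) nga3) nde3) nr0) ns0) nt0
  refine (mul_eq_zero.mp ?_).resolve_left hPi
  linear_combination
      (cB*cC*be2*de2*ga3*de3*r0*s0*t0) * E1
    + (cB*cD*be1*ga1*ga3*de3*r0*s0*t0) * E2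
    + (cC*cD*be1*ga1*be2*de2*r0*s0*t0) * E3
    + (cB*m01*be1*be2*ga3*de3*s0*t0*ga1*de2) * h1
    - (cB*m01*be1*be2*ga3*de3*s0*t0*cC*de2) * h2
    - (cB*m01*be1*be2*ga3*de3*s0*t0*cD*ga1) * h3
    + (cC*m02*ga1*be2*de2*ga3*r0*t0*be1*de3) * h4
    - (cC*m02*ga1*be2*de2*ga3*r0*t0*cB*de3) * h5
    - (cC*m02*ga1*be2*de2*ga3*r0*t0*cD*be1) * h6
    + (cD*m03*be1*ga1*de2*de3*r0*s0*be2*ga3) * h7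
    - (cD*m03*be1*ga1*de2*de3*r0*s0*cB*ga3) * h8
    - (cD*m03*be1*ga1*de2*de3*r0*s0*cC*be2) * h9
end

section
/- Let K be a field, let n ≥ 1, d ≥ 1, and fix a d^{n}-cage over K. Then for every node p_I, the gradient vectors ∇𝓛_1(p_I),…,∇𝓛_n(p_I) ∈ K^{n+1} of the products 𝓛_j = ∏_{i=1}^d L_{j,i} are linearly independent; indeed ∇𝓛_j(p_I) = c_j·∇L_{j,I_j}(p_I) where c_j = ∏_{i ≠ I_j} L_{j,i}(p_I) ≠ 0. -/
/-!
By the Leibniz rule, at a common zero of one factor the gradient of a product is the gradient of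
that factor times the value of the remaining ones; at the node `p I` this makes `∇𝓛_j(p I)` the
nonzero multiple `c_j • ∇L_{j,I_j}(p I)`. The gradient of a linear form is its coefficient vector,
which determines the form, so linearly independent linear forms have linearly independent
gradients at every point.
-/

open MvPolynomial

namespace MvPolynomial

variable {σ R : Type*}

theorem IsHomogeneous.eval_pderiv_eq_coeff_single [CommSemiring R] {P : MvPolynomial σ R}
    (hP : P.IsHomogeneous 1) (v : σ → R) (l : σ) :
    eval v (pderiv l P) = coeff (Finsupp.single l 1) P := by
  have hconst : pderiv l P = C (coeff 0 (pderiv l P)) :=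
    totalDegree_eq_zero_iff_eq_C.mp ((totalDegree_zero_iff_isHomogeneous σ).mpr hP.pderiv)
  rw [hconst, eval_C, coeff_pderiv, zero_add]
  simp

theorem IsHomogeneous.eq_zero_of_forall_coeff_single_eq_zero [CommSemiring R]
    {P : MvPolynomial σ R} (hP : P.IsHomogeneous 1) (h : ∀ l, coeff (Finsupp.single l 1) P = 0) :
    P = 0 := by
  ext m
  by_cases hm : m.degree = 1
  · obtain ⟨l, rfl⟩ : m ∈ Set.range fun l => Finsupp.single l 1 := by
      rwa [Finsupp.range_single_one]
    simpa using h l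
  · simpa using hP.coeff_eq_zero hm

theorem linearIndependent_eval_pderiv_of_isHomogeneous_one [CommRing R] {ι : Type*}
    {f : ι → MvPolynomial σ R} (hf : LinearIndependent R f) (hhom : ∀ i, (f i).IsHomogeneous 1)
    (v : σ → R) :
    LinearIndependent R fun i l => eval v (pderiv l (f i)) := by
  let linearCoeffs : homogeneousSubmodule σ R 1 →ₗ[R] σ → R :=
    (LinearMap.pi fun l => lcoeff R (Finsupp.single l 1)).domRestrict _
  have hker : LinearMap.ker linearCoeffs = ⊥ :=
    LinearMap.ker_eq_bot'.mpr fun P hP =>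
      Subtype.ext (P.2.eq_zero_of_forall_coeff_single_eq_zero fun l => congrFun hP l)
  have hf' : LinearIndependent R fun i => (⟨f i, hhom i⟩ : homogeneousSubmodule σ R 1) :=
    .of_comp (Submodule.subtype _) hf
  have hgrad : (fun i l => eval v (pderiv l (f i))) = linearCoeffs ∘ fun i => ⟨f i, hhom i⟩ := by
    funext i l
    simp only [Function.comp_apply, linearCoeffs, LinearMap.domRestrict_apply,
      LinearMap.pi_apply, lcoeff_apply]
    exact (hhom i).eval_pderiv_eq_coeff_single v l
  rw [hgrad]
  exact hf'.map' linearCoeffs hker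

theorem eval_pderiv_prod_of_eval_eq_zero [CommSemiring R] {ι : Type*} [DecidableEq ι]
    {s : Finset ι} {f : ι → MvPolynomial σ R} {i : ι} (hi : i ∈ s) {v : σ → R}
    (hv : eval v (f i) = 0) (l : σ) :
    eval v (pderiv l (∏ k ∈ s, f k)) =
      (∏ k ∈ s.erase i, eval v (f k)) * eval v (pderiv l (f i)) := by
  rw [← Finset.mul_prod_erase s f hi, pderiv_mul, map_add, map_mul, map_mul, hv, zero_mul,
    add_zero, map_prod, mul_comm]

end MvPolynomial

theorem gradients_of_cage_products_at_node_general
    {K : Type*} [Field K] (n d : ℕ)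
    (L : Fin n → Fin d → MvPolynomial (Fin (n + 1)) K)
    (hL : ∀ j i, (L j i).IsHomogeneous 1)
    (p : (Fin n → Fin d) → Fin (n + 1) → K)
    (hind : ∀ I : Fin n → Fin d, LinearIndependent K fun j => L j (I j))
    (hline : ∀ (I : Fin n → Fin d) (v : Fin (n + 1) → K),
      (∀ j, MvPolynomial.eval v (L j (I j)) = 0) ↔ ∃ c : K, v = c • p I)
    (hne : ∀ (j : Fin n) (i : Fin d) (I : Fin n → Fin d),
      i ≠ I j → MvPolynomial.eval (p I) (L j i) ≠ 0)
    (I : Fin n → Fin d) :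
    (∀ j : Fin n,
      (∏ i ∈ Finset.univ.erase (I j), MvPolynomial.eval (p I) (L j i)) ≠ 0 ∧
      (fun l : Fin (n + 1) =>
          MvPolynomial.eval (p I) (MvPolynomial.pderiv l (∏ i, L j i)))
        = (∏ i ∈ Finset.univ.erase (I j), MvPolynomial.eval (p I) (L j i)) •
          fun l : Fin (n + 1) =>
            MvPolynomial.eval (p I) (MvPolynomial.pderiv l (L j (I j)))) ∧
    LinearIndependent K
      (fun j : Fin n => fun l : Fin (n + 1) =>
        MvPolynomial.eval (p I) (MvPolynomial.pderiv l (∏ i, L j i))) := by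
  let c : Fin n → K := fun j => ∏ i ∈ Finset.univ.erase (I j), eval (p I) (L j i)
  have hnode : ∀ j, eval (p I) (L j (I j)) = 0 := (hline I (p I)).mpr ⟨1, (one_smul K _).symm⟩
  have hc : ∀ j, c j ≠ 0 := fun j =>
    Finset.prod_ne_zero_iff.mpr fun i hi => hne j i I (Finset.ne_of_mem_erase hi)
  have hgrad : ∀ j, (fun l => eval (p I) (pderiv l (∏ i, L j i)))
      = c j • fun l => eval (p I) (pderiv l (L j (I j))) := fun j =>
    funext fun l => by
      rw [Pi.smul_apply, smul_eq_mul]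
      exact eval_pderiv_prod_of_eval_eq_zero (Finset.mem_univ _) (hnode j) l
  refine ⟨fun j => ⟨hc j, hgrad j⟩, ?_⟩
  rw [funext hgrad]
  exact (linearIndependent_eval_pderiv_of_isHomogeneous_one (hind I) (fun j => hL j (I j))
    (p I)).units_smul fun j => Units.mk0 (c j) (hc j)

/-- At every node `p_I` of a `d^{n}`-cage, the gradients of the products
`𝓛_j = ∏ i, L j i` are linearly independent; indeed
`∇𝓛_j(p_I) = c_j • ∇L_{j,I_j}(p_I)` with `c_j = ∏_{i ≠ I_j} L_{j,i}(p_I) ≠ 0`. -/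
theorem gradients_of_cage_products_at_node
    {K : Type*} [Field K] (n d : ℕ) (hn : 1 ≤ n) (hd : 1 ≤ d)
    (L : Fin n → Fin d → MvPolynomial (Fin (n + 1)) K)
    (hL : ∀ j i, (L j i).IsHomogeneous 1)
    (p : (Fin n → Fin d) → Fin (n + 1) → K)
    (hp0 : ∀ I, p I ≠ 0)
    (hind : ∀ I : Fin n → Fin d, LinearIndependent K fun j => L j (I j))
    (hline : ∀ (I : Fin n → Fin d) (v : Fin (n + 1) → K),
      (∀ j, MvPolynomial.eval v (L j (I j)) = 0) ↔ ∃ c : K, v = c • p I)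
    (hne : ∀ (j : Fin n) (i : Fin d) (I : Fin n → Fin d),
      i ≠ I j → MvPolynomial.eval (p I) (L j i) ≠ 0)
    (I : Fin n → Fin d) :
    (∀ j : Fin n,
      (∏ i ∈ Finset.univ.erase (I j), MvPolynomial.eval (p I) (L j i)) ≠ 0 ∧
      (fun l : Fin (n + 1) =>
          MvPolynomial.eval (p I) (MvPolynomial.pderiv l (∏ i, L j i)))
        = (∏ i ∈ Finset.univ.erase (I j), MvPolynomial.eval (p I) (L j i)) •
          fun l : Fin (n + 1) =>
            MvPolynomial.eval (p I) (MvPolynomial.pderiv l (L j (I j)))) ∧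
    LinearIndependent K
      (fun j : Fin n => fun l : Fin (n + 1) =>
        MvPolynomial.eval (p I) (MvPolynomial.pderiv l (∏ i, L j i))) :=
  gradients_of_cage_products_at_node_general n d L hL p hind hline hne I
end

section
/- Let K be a field and fix a 4^{2}-cage over K, with nodes p_I, I ∈ {1,2,3,4}². Consider the homogeneous degree-4 polynomial Q := L_{1,1}·L_{1,2}·L_{1,3}·L_{2,1}. Then Q(p_I) = 0 for each of the 13 nodes p_I with I_1 ≤ 3 or I_2 = 1, while Q(p_I) ≠ 0 for each of the three nodes with I ∈ {(4,2),(4,3),(4,4)}. In particular, there is a set of 13 nodes (the cardinality of a supra-simplicial set in a 4^{2}-cage) and a homogeneous quartic vanishing on this set but not on all 16 nodes, so not every set of nodes of supra-simplicial cardinality imposes the same conditions as a supra-simplicial set. -/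
/-- In a `4^{2}`-cage, the quartic `Q = L_{1,1}·L_{1,2}·L_{1,3}·L_{2,1}`
vanishes at the `13` nodes `p_I` with `I_1 ≤ 3` or `I_2 = 1` (a set whose
cardinality equals that of a supra-simplicial set), but not at the three
remaining nodes `(4,2), (4,3), (4,4)`: not every set of nodes of
supra-simplicial cardinality imposes independent conditions. -/
theorem quartic_vanishing_on_thirteen_nodes_but_not_all
    {K : Type*} [Field K]
    (L : Fin 2 → Fin 4 → MvPolynomial (Fin 3) K)
    (hL : ∀ j i, (L j i).IsHomogeneous 1)
    (p : (Fin 2 → Fin 4) → Fin 3 → K)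
    (hp0 : ∀ I, p I ≠ 0)
    (hind : ∀ I : Fin 2 → Fin 4, LinearIndependent K fun j => L j (I j))
    (hline : ∀ (I : Fin 2 → Fin 4) (v : Fin 3 → K),
      (∀ j, MvPolynomial.eval v (L j (I j)) = 0) ↔ ∃ c : K, v = c • p I)
    (hne : ∀ (j : Fin 2) (i : Fin 4) (I : Fin 2 → Fin 4),
      i ≠ I j → MvPolynomial.eval (p I) (L j i) ≠ 0) :
    (∀ I : Fin 2 → Fin 4, (I 0 : ℕ) ≤ 2 ∨ I 1 = 0 →
        MvPolynomial.eval (p I) (L 0 0 * L 0 1 * L 0 2 * L 1 0) = 0) ∧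
    (∀ I : Fin 2 → Fin 4, (I 0 : ℕ) = 3 → I 1 ≠ 0 →
        MvPolynomial.eval (p I) (L 0 0 * L 0 1 * L 0 2 * L 1 0) ≠ 0) := by
  have hvan : ∀ (I : Fin 2 → Fin 4) (j : Fin 2),
      MvPolynomial.eval (p I) (L j (I j)) = 0 := by
    intro I j
    exact ((hline I (p I)).mpr ⟨1, by simp⟩) j
  constructor
  · intro I hI
    simp only [map_mul]
    rcases hI with h0 | h1
    · have hc : I 0 = 0 ∨ I 0 = 1 ∨ I 0 = 2 := by
        simp only [Fin.ext_iff]; omega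
      rcases hc with h | h | h <;>
        rw [← h] <;> simp [hvan I 0]
    · rw [← h1]; simp [hvan I 1]
  · intro I h3 h1
    simp only [map_mul, mul_ne_zero_iff]
    have h0 : ∀ i : Fin 4, (i : ℕ) ≤ 2 → i ≠ I 0 := by
      intro i hi; intro he; rw [he] at hi; omega
    exact ⟨⟨⟨hne 0 0 I (h0 0 (by norm_num)), hne 0 1 I (h0 1 (by norm_num))⟩,
      hne 0 2 I (h0 2 (by norm_num))⟩, hne 1 0 I (fun he => h1 he.symm)⟩
end

section
/- Let K be a field, let n ≥ 1, d ≥ 1, fix a d^{n}-cage over K, and fix a node p = p_I. For every n-dimensional linear subspace τ ⊆ K^{n+1} with p ∈ τ, there exists a nonzero λ = (λ_1,…,λ_n) ∈ K^n, unique up to multiplication by a nonzero scalar, such that the polynomial P_λ := ∑_{j=1}^n λ_j·𝓛_j satisfies τ = { v ∈ K^{n+1} : ∑_{l=0}^{n} (∂P_λ/∂x_l)(p)·v_l = 0 }. (A degree-d hypersurface through all the nodes of the cage is uniquely determined by its tangent hyperplane at one node, and every hyperplane through that node occurs.) -/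
/-!
At the node `p = p_I` only the factor `L_{j,I_j}` of `𝓛_j` vanishes, so the product rule gives
`d𝓛_j(p) = c_j • L_{j,I_j}` with `c_j = ∏_{i ≠ I_j} L_{j,i}(p) ≠ 0`. Hence the common kernel of the
differentials `d𝓛_j(p)` is the line `K p`; since it is one-dimensional, these `n` linear forms on
`K^{n+1}` are linearly independent. The tangent form of `P_λ` at `p` is `∑ λ_j d𝓛_j(p)`. A
hyperplane `τ ∋ p` is the kernel of a form vanishing on `K p`, hence of some `∑ λ_j d𝓛_j(p)`; two
forms with the same kernel are proportional, and independence transfers this to the coefficients.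
-/

open MvPolynomial Module LinearMap Finset

namespace MvPolynomial

variable {R σ : Type*} [CommSemiring R] [Fintype σ]

noncomputable def tangentForm (P : MvPolynomial σ R) (x : σ → R) : Dual R (σ → R) :=
  ∑ l, eval x (pderiv l P) • LinearMap.proj l

@[simp]
theorem tangentForm_apply (P : MvPolynomial σ R) (x v : σ → R) :
    tangentForm P x v = ∑ l, eval x (pderiv l P) * v l := by
  simp [tangentForm]

theorem tangentForm_sum_C_mul {ι : Type*} (s : Finset ι) (μ : ι → R)
    (Q : ι → MvPolynomial σ R) (x : σ → R) :
    tangentForm (∑ j ∈ s, C (μ j) * Q j) x = ∑ j ∈ s, μ j • tangentForm (Q j) x := by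
  ext v
  simp only [tangentForm_apply, map_sum, Derivation.leibniz, smul_eq_mul, derivation_C, mul_zero,
    add_zero, map_mul, eval_C, sum_mul, mul_assoc, LinearMap.coe_sum, LinearMap.coe_smul,
    Finset.sum_apply, Pi.smul_apply, mul_sum]
  exact sum_comm

theorem tangentForm_mul_of_eval_eq_zero {q : MvPolynomial σ R} {x : σ → R} (hq : eval x q = 0)
    (r : MvPolynomial σ R) : tangentForm (q * r) x = eval x r • tangentForm q x := by
  ext v
  simp [hq, mul_sum, mul_comm, mul_left_comm]

theorem tangentForm_prod_of_eval_eq_zero {ι : Type*} [DecidableEq ι] {s : Finset ι} {i : ι}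
    (hi : i ∈ s) (Q : ι → MvPolynomial σ R) {x : σ → R} (hQ : eval x (Q i) = 0) :
    tangentForm (∏ k ∈ s, Q k) x = (∏ k ∈ s.erase i, eval x (Q k)) • tangentForm (Q i) x := by
  rw [← mul_prod_erase s Q hi, tangentForm_mul_of_eval_eq_zero hQ, map_prod]

theorem IsHomogeneous.tangentForm_apply {q : MvPolynomial σ R} (hq : q.IsHomogeneous 1)
    (x v : σ → R) : tangentForm q x v = eval v q := by
  have hconst : ∀ l, eval v (pderiv l q) = eval x (pderiv l q) := by
    intro l
    have := totalDegree_eq_zero_iff_eq_C.1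
      ((totalDegree_zero_iff_isHomogeneous σ).2 (hq.pderiv (i := l)))
    rw [this, eval_C, eval_C]
  have := congrArg (eval v) hq.sum_X_mul_pderiv
  simp only [map_sum, map_mul, eval_X, one_smul, hconst] at this
  simp [← this, mul_comm]

theorem tangentForm_prod_apply_of_isHomogeneous {ι : Type*} [Fintype ι] [DecidableEq ι]
    {Q : ι → MvPolynomial σ R} {a : ι} (ha : (Q a).IsHomogeneous 1) {x : σ → R}
    (hx : eval x (Q a) = 0) (v : σ → R) :
    tangentForm (∏ i, Q i) x v = (∏ i ∈ univ.erase a, eval x (Q i)) * eval v (Q a) := by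
  rw [tangentForm_prod_of_eval_eq_zero (mem_univ a) Q hx, LinearMap.smul_apply,
    ha.tangentForm_apply, smul_eq_mul]

end MvPolynomial

section Dual

variable {K V : Type*} [Field K] [AddCommGroup V] [Module K V]

theorem Module.Dual.exists_eq_smul_of_ker_eq {f g : Dual K V} (hf : f ≠ 0)
    (h : ker g = ker f) : ∃ c : K, c ≠ 0 ∧ g = c • f := by
  obtain ⟨x, hx⟩ : ∃ x, f x ≠ 0 := by
    by_contra! h0
    exact hf (LinearMap.ext h0)
  have hgx : g x ≠ 0 := fun h0 => hx (by rwa [← mem_ker, ← h, mem_ker])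
  refine ⟨g x / f x, div_ne_zero hgx hx, LinearMap.ext fun v => ?_⟩
  have hv : v - (f v / f x) • x ∈ ker g := by
    rw [h, mem_ker, map_sub, map_smul, smul_eq_mul, div_mul_cancel₀ _ hx, sub_self]
  rw [mem_ker, map_sub, map_smul, smul_eq_mul, sub_eq_zero] at hv
  rw [hv, LinearMap.smul_apply, smul_eq_mul]
  field_simp

variable [FiniteDimensional K V]

theorem Submodule.exists_dual_ker_eq_of_finrank_add_one {τ : Submodule K V}
    (hτ : finrank K τ + 1 = finrank K V) : ∃ f : Dual K V, f ≠ 0 ∧ ker f = τ := by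
  obtain ⟨f, hf, hτf⟩ := τ.exists_dual_map_eq_bot_of_lt_top
    (Submodule.lt_top_of_finrank_lt_finrank (by omega)) inferInstance
  refine ⟨f, hf, (Submodule.eq_of_le_of_finrank_eq ?_ ?_).symm⟩
  · exact Submodule.map_le_iff_le_comap.1 hτf.le
  · have := Module.Dual.finrank_ker_add_one_of_ne_zero hf
    omega

theorem linearIndependent_of_finrank_iInf_ker_add_card {ι : Type*} [Fintype ι]
    {L : ι → Dual K V} (h : finrank K ↥(⨅ j, ker (L j)) + Fintype.card ι = finrank K V) :
    LinearIndependent K L := by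
  classical
  have hsurj : Function.Surjective (LinearMap.pi L) := by
    rw [← range_eq_top]
    apply Submodule.eq_top_of_finrank_eq
    have := finrank_range_add_finrank_ker (LinearMap.pi L)
    rw [ker_pi] at this
    rw [finrank_fintype_fun_eq_card]
    omega
  rw [Fintype.linearIndependent_iff]
  intro g hg i
  obtain ⟨v, hv⟩ := hsurj (Pi.single i 1)
  have hLv : ∀ j, L j v = (Pi.single i 1 : ι → K) j := fun j =>
    (pi_apply L v j).symm.trans (congrFun hv j)
  simpa [hLv, Pi.single_apply] using congrArg (· v) hg

theorem exists_ker_sum_smul_eq {ι : Type*} [Fintype ι] {L : ι → Dual K V}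
    (hL : LinearIndependent K L) {τ : Submodule K V} (hτ : finrank K τ + 1 = finrank K V)
    (hle : ⨅ j, ker (L j) ≤ τ) :
    ∃ lam : ι → K, lam ≠ 0 ∧ τ = ker (∑ j, lam j • L j) ∧
      ∀ mu : ι → K, τ = ker (∑ j, mu j • L j) → ∃ c : K, c ≠ 0 ∧ mu = c • lam := by
  obtain ⟨f, hf, rfl⟩ := Submodule.exists_dual_ker_eq_of_finrank_add_one hτ
  obtain ⟨lam, hlam⟩ :=
    (Submodule.mem_span_range_iff_exists_fun K).1 (mem_span_of_iInf_ker_le_ker hle)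
  refine ⟨lam, ?_, by rw [hlam], fun mu hmu => ?_⟩
  · rintro rfl
    simp only [Pi.zero_apply, zero_smul, sum_const_zero] at hlam
    exact hf hlam.symm
  · obtain ⟨c, hc, hmuc⟩ := Module.Dual.exists_eq_smul_of_ker_eq hf hmu.symm
    refine ⟨c, hc, linearIndependent_iff_injective_fintypeLinearCombination.1 hL ?_⟩
    simp only [Fintype.linearCombination_apply, Pi.smul_apply, smul_eq_mul, mul_smul,
      ← smul_sum, hmuc, hlam]

end Dual

theorem cage_hypersurface_determined_by_tangent_hyperplane_at_node_general
    {K : Type*} [Field K] (n d : ℕ)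
    (L : Fin n → Fin d → MvPolynomial (Fin (n + 1)) K)
    (hL : ∀ j i, (L j i).IsHomogeneous 1)
    (p : (Fin n → Fin d) → Fin (n + 1) → K)
    (hp0 : ∀ I, p I ≠ 0)
    (hline : ∀ (I : Fin n → Fin d) (v : Fin (n + 1) → K),
      (∀ j, MvPolynomial.eval v (L j (I j)) = 0) ↔ ∃ c : K, v = c • p I)
    (hne : ∀ (j : Fin n) (i : Fin d) (I : Fin n → Fin d),
      i ≠ I j → MvPolynomial.eval (p I) (L j i) ≠ 0)
    (I : Fin n → Fin d)
    (τ : Submodule K (Fin (n + 1) → K))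
    (hτ : Module.finrank K τ = n) (hpτ : p I ∈ τ) :
    ∃ lam : Fin n → K, lam ≠ 0 ∧
      (↑τ : Set (Fin (n + 1) → K)) =
        {v : Fin (n + 1) → K |
          ∑ l, MvPolynomial.eval (p I)
              (MvPolynomial.pderiv l
                (∑ j, MvPolynomial.C (lam j) * ∏ i, L j i)) * v l = 0} ∧
      ∀ mu : Fin n → K, mu ≠ 0 →
        (↑τ : Set (Fin (n + 1) → K)) =
          {v : Fin (n + 1) → K |
            ∑ l, MvPolynomial.eval (p I)
                (MvPolynomial.pderiv l
                  (∑ j, MvPolynomial.C (mu j) * ∏ i, L j i)) * v l = 0} →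
        ∃ c : K, c ≠ 0 ∧ mu = c • lam := by
  classical
  set T : Fin n → Dual K (Fin (n + 1) → K) := fun j => tangentForm (∏ i, L j i) (p I)
  have hnode : ∀ j, eval (p I) (L j (I j)) = 0 := (hline I (p I)).2 ⟨1, (one_smul K _).symm⟩
  have hker : ⨅ j, ker (T j) = K ∙ p I := by
    ext v
    have hT : ∀ j, T j v = (∏ i ∈ univ.erase (I j), eval (p I) (L j i)) * eval v (L j (I j)) :=
      fun j => tangentForm_prod_apply_of_isHomogeneous (hL j (I j)) (hnode j) v
    have hc : ∀ j, ∏ i ∈ univ.erase (I j), eval (p I) (L j i) ≠ 0 := fun j =>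
      prod_ne_zero_iff.2 fun i hi => hne j i I (ne_of_mem_erase hi)
    simp only [Submodule.mem_iInf, mem_ker, hT, mul_eq_zero, hc, false_or]
    rw [hline, Submodule.mem_span_singleton]
    exact exists_congr fun c => eq_comm
  have hset : ∀ mu : Fin n → K, {v : Fin (n + 1) → K | ∑ l, eval (p I)
      (pderiv l (∑ j, C (mu j) * ∏ i, L j i)) * v l = 0} = ker (∑ j, mu j • T j) := fun mu => by
    ext v
    simp [← tangentForm_sum_C_mul, T]
  obtain ⟨lam, hlam0, hτlam, hlam_unique⟩ := exists_ker_sum_smul_eq (L := T)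
    (linearIndependent_of_finrank_iInf_ker_add_card (by
      rw [hker, finrank_span_singleton (hp0 I)]; simp [add_comm]))
    (by simp [hτ]) (hker ▸ (Submodule.span_singleton_le_iff_mem _ _).2 hpτ)
  refine ⟨lam, hlam0, by rw [hset, hτlam], fun mu _ hmu => hlam_unique mu ?_⟩
  exact SetLike.coe_injective (hmu.trans (hset mu))

/-- A degree-`d` hypersurface through all the nodes of a `d^{n}`-cage is
uniquely determined (up to scalar) by its tangent hyperplane at one node, and
every hyperplane through that node occurs as such a tangent hyperplane. -/
theorem cage_hypersurface_determined_by_tangent_hyperplane_at_node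
    {K : Type*} [Field K] (n d : ℕ) (hn : 1 ≤ n) (hd : 1 ≤ d)
    (L : Fin n → Fin d → MvPolynomial (Fin (n + 1)) K)
    (hL : ∀ j i, (L j i).IsHomogeneous 1)
    (p : (Fin n → Fin d) → Fin (n + 1) → K)
    (hp0 : ∀ I, p I ≠ 0)
    (hind : ∀ I : Fin n → Fin d, LinearIndependent K fun j => L j (I j))
    (hline : ∀ (I : Fin n → Fin d) (v : Fin (n + 1) → K),
      (∀ j, MvPolynomial.eval v (L j (I j)) = 0) ↔ ∃ c : K, v = c • p I)
    (hne : ∀ (j : Fin n) (i : Fin d) (I : Fin n → Fin d),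
      i ≠ I j → MvPolynomial.eval (p I) (L j i) ≠ 0)
    (I : Fin n → Fin d)
    (τ : Submodule K (Fin (n + 1) → K))
    (hτ : Module.finrank K τ = n) (hpτ : p I ∈ τ) :
    ∃ lam : Fin n → K, lam ≠ 0 ∧
      (↑τ : Set (Fin (n + 1) → K)) =
        {v : Fin (n + 1) → K |
          ∑ l, MvPolynomial.eval (p I)
              (MvPolynomial.pderiv l
                (∑ j, MvPolynomial.C (lam j) * ∏ i, L j i)) * v l = 0} ∧
      ∀ mu : Fin n → K, mu ≠ 0 →
        (↑τ : Set (Fin (n + 1) → K)) =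
          {v : Fin (n + 1) → K |
            ∑ l, MvPolynomial.eval (p I)
                (MvPolynomial.pderiv l
                  (∑ j, MvPolynomial.C (mu j) * ∏ i, L j i)) * v l = 0} →
        ∃ c : K, c ≠ 0 ∧ mu = c • lam :=
  cage_hypersurface_determined_by_tangent_hyperplane_at_node_general n d L hL p hp0 hline hne I τ hτ
    hpτ
end
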